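/- arXiv:1604.01288 — 3 statements merged into one kernel-verified Lean document; each statement's English description precedes it below -/
import Mathlib

section
/- Let F be an unsatisfiable hitting clause-set containing a variable v with ldeg_F(v) = 2 and ldeg_F(−v) = 2. Then either F contains an fs-pair as a subset, or there is an nfs-flip F' of F such that F' contains an fs-pair as a subset. -/
/-- A clause-set: a finite set of finite sets of integers. -/
abbrev Cls := Finset (Finset ℤ)

/-- A clause: a finite set of nonzero integers, clash-free. -/
def IsClause (C : Finset ℤ) : Prop := (0 : ℤ) ∉ C ∧ ∀ x ∈ C, -x ∉ C

/-- All members are clauses. -/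
def IsClauseSet (F : Cls) : Prop := ∀ C ∈ F, IsClause C

/-- Satisfiability: some clause (partial assignment) meets every clause of `F`. -/
def Sat (F : Cls) : Prop := ∃ S : Finset ℤ, IsClause S ∧ ∀ D ∈ F, (S ∩ D).Nonempty

/-- Hitting: any two distinct clauses clash. -/
def Hitting (F : Cls) : Prop := ∀ C ∈ F, ∀ D ∈ F, C ≠ D → ∃ x ∈ C, -x ∈ D

/-- Unsatisfiable hitting clause-set. -/
def UHit (F : Cls) : Prop := IsClauseSet F ∧ Hitting F ∧ ¬ Sat F

/-- The variables of a clause-set (as absolute values of its literals). -/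
def cvar (F : Cls) : Finset ℤ := F.sup (fun C => C.image (fun x => |x|))

/-- Number of variables. -/
def nvar (F : Cls) : ℕ := (cvar F).card

/-- Deficiency: number of clauses minus number of variables. -/
def deficiency (F : Cls) : ℤ := (F.card : ℤ) - (nvar F : ℤ)

/-- Literal degree. -/
def ldeg (F : Cls) (x : ℤ) : ℕ := (F.filter (fun C => x ∈ C)).card

/-- Variable degree. -/
def vdeg (F : Cls) (v : ℤ) : ℕ := ldeg F v + ldeg F (-v)

/-- Singular variable. -/
def SingularVar (F : Cls) (v : ℤ) : Prop :=
  v ∈ cvar F ∧ min (ldeg F v) (ldeg F (-v)) = 1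

/-- Nonsingular clause-set. -/
def Nonsingular (F : Cls) : Prop := ∀ v, ¬ SingularVar F v

/-- Number of singular variables. -/
def nsv (F : Cls) : ℕ :=
  ((cvar F).filter (fun v => min (ldeg F v) (ldeg F (-v)) = 1)).card

/-- Number of 1-singular variables. -/
def nosv (F : Cls) : ℕ :=
  ((cvar F).filter (fun v => min (ldeg F v) (ldeg F (-v)) = 1 ∧ vdeg F v = 2)).card

/-- Number of singular, non-1-singular variables. -/
def nnosv (F : Cls) : ℕ :=
  ((cvar F).filter (fun v => min (ldeg F v) (ldeg F (-v)) = 1 ∧ vdeg F v ≠ 2)).card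

/-- Full subsumption pair: `{E ∪ {x}, E ∪ {-x}}`. -/
def IsFsPair (P : Cls) : Prop :=
  ∃ (E : Finset ℤ) (x : ℤ), IsClause E ∧ x ≠ 0 ∧ x ∉ E ∧ -x ∉ E ∧
    P = {insert x E, insert (-x) E}

/-- Strict fs-resolvability: an fs-pair whose resolvent is not in `F`, and whose
resolution variable occurs in the rest of `F`. -/
def StrictlyFsResolvable (F : Cls) : Prop :=
  ∃ (E : Finset ℤ) (x : ℤ), IsClause E ∧ x ≠ 0 ∧ x ∉ E ∧ -x ∉ E ∧
    insert x E ∈ F ∧ insert (-x) E ∈ F ∧ E ∉ F ∧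
    |x| ∈ cvar (F \ {insert x E, insert (-x) E})

/-- `F'` is an nfs-flip of `F`: an nfs-pair `{E ∪ {x}, E ∪ {-x,y}} ⊆ F` is replaced
by its flipped pair `{E ∪ {x,-y}, E ∪ {y}}`, which must not intersect `F`. -/
def NfsFlip (F F' : Cls) : Prop :=
  ∃ (E : Finset ℤ) (x y : ℤ), IsClause E ∧ x ≠ 0 ∧ y ≠ 0 ∧ |x| ≠ |y| ∧
    x ∉ E ∧ -x ∉ E ∧ y ∉ E ∧ -y ∉ E ∧
    insert x E ∈ F ∧ insert y (insert (-x) E) ∈ F ∧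
    insert (-y) (insert x E) ∉ F ∧ insert y E ∉ F ∧
    F' = (F \ {insert x E, insert y (insert (-x) E)}) ∪
         {insert (-y) (insert x E), insert y E}

/-- Intersection of all clauses of `F` (for nonempty `F`). -/
def bigInter (F : Cls) : Finset ℤ := (F.sup id).filter (fun x => ∀ C ∈ F, x ∈ C)

/-- Clause-factor: a nonempty `F' ⊆ F` whose residue is unsatisfiable. -/
def ClauseFactor (F F' : Cls) : Prop :=
  F'.Nonempty ∧ F' ⊆ F ∧ ¬ Sat (F'.image (fun E => E \ bigInter F'))

/-- A clause-factor is trivial if it has one clause, or is unsatisfiable and all of `F`. -/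
def TrivialFactor (F F' : Cls) : Prop := F'.card = 1 ∨ (¬ Sat F' ∧ F' = F)

/-- Clause-irreducible: every clause-factor is trivial. -/
def ClauseIrreducible (F : Cls) : Prop := ∀ F', ClauseFactor F F' → TrivialFactor F F'

/-- DP-reduction (variable elimination) on variable `v`. -/
def dp (v : ℤ) (F : Cls) : Cls :=
  ((F ×ˢ F).filter (fun p => p.1 ∩ p.2.image (fun x => -x) = {v})).image
    (fun p => (p.1 ∪ p.2) \ {v, -v}) ∪
  F.filter (fun C => v ∉ C ∧ -v ∉ C)

/-- `x` (or `-x`) occurs in a clause of `F`. -/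
def LitIn (F : Cls) (x : ℤ) : Prop := ∃ C ∈ F, x ∈ C ∨ -x ∈ C

/-- Isomorphism of clause-sets. -/
def Iso (F G : Cls) : Prop :=
  ∃ f : ℤ → ℤ, (∀ x, f (-x) = - f x) ∧
    (∀ x y, LitIn F x → LitIn F y → f x = f y → x = y) ∧
    G = F.image (fun C => C.image f)

/-- The clause-set D3. -/
def D3 : Cls := {({1,2,3} : Finset ℤ), {-1,-2,-3}, {-1,2}, {-2,3}, {-3,1}}

/-- Logical equivalence of clause-sets. -/
def LogEquiv (F G : Cls) : Prop :=
  ∀ S : Finset ℤ, IsClause S →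
    ((∀ D ∈ F, (S ∩ D).Nonempty) ↔ (∀ D ∈ G, (S ∩ D).Nonempty))

section Helpers

lemma mem_ne_zero {C : Finset ℤ} (h : IsClause C) {a : ℤ} (ha : a ∈ C) : a ≠ 0 := by
  intro h0; exact h.1 (h0 ▸ ha)

lemma neg_not_mem {C : Finset ℤ} (h : IsClause C) {a : ℤ} (ha : a ∈ C) : -a ∉ C :=
  h.2 a ha

lemma isClause_subset {C D : Finset ℤ} (h : C ⊆ D) (hD : IsClause D) : IsClause C :=
  ⟨fun h0 => hD.1 (h h0), fun x hx hnx => hD.2 x (h hx) (h hnx)⟩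

/-- negation image of a clause -/
def negC (C : Finset ℤ) : Finset ℤ := C.image (fun x => -x)

lemma mem_negC {C : Finset ℤ} {a : ℤ} : a ∈ negC C ↔ -a ∈ C := by
  constructor
  · rintro h
    rw [negC, Finset.mem_image] at h
    obtain ⟨b, hb, rfl⟩ := h
    simpa using hb
  · intro h
    rw [negC, Finset.mem_image]
    exact ⟨-a, h, by ring⟩

lemma isClause_negC {C : Finset ℤ} (h : IsClause C) : IsClause (negC C) := by
  refine ⟨fun h0 => ?_, fun x hx hnx => ?_⟩
  · rw [mem_negC] at h0
    exact h.1 (by simpa using h0)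
  · rw [mem_negC] at hx hnx
    rw [neg_neg] at hnx
    exact h.2 x hnx hx

lemma isClause_insert {S : Finset ℤ} {a : ℤ} (ha : a ≠ 0) (hna : -a ∉ S)
    (hS : IsClause S) : IsClause (insert a S) := by
  refine ⟨fun h0 => ?_, fun x hx hnx => ?_⟩
  · rcases Finset.mem_insert.1 h0 with h | h
    · exact ha h.symm
    · exact hS.1 h
  · rcases Finset.mem_insert.1 hx with rfl | hx
    · rcases Finset.mem_insert.1 hnx with h | h
      · omega
      · exact hna h
    · rcases Finset.mem_insert.1 hnx with h | h
      · exact hna (by rw [← h, neg_neg]; exact hx)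
      · exact hS.2 x hx h

lemma unsat_miss {F : Cls} (hU : UHit F) (S : Finset ℤ) (hS : IsClause S) :
    ∃ D ∈ F, ∀ a ∈ S, a ∉ D := by
  by_contra h
  push_neg at h
  exact hU.2.2 ⟨S, hS, fun D hD => by
    obtain ⟨a, ha, haD⟩ := h D hD
    exact ⟨a, Finset.mem_inter.2 ⟨ha, haD⟩⟩⟩

/-- the central "missed clause" lemma -/
lemma keyRow {F : Cls} (hU : UHit F) (w : ℤ) (C D D' : Finset ℤ)
    (hC : C ∈ F) (hwC : w ∈ C)
    (hnw_only : ∀ W ∈ F, -w ∈ W → W = D ∨ W = D')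
    (S : Finset ℤ) (hS : IsClause S) (hwS : w ∈ S)
    (hcov : ∀ a ∈ C, a ≠ w → -a ∈ S) :
    (∀ a ∈ S, a ∉ D) ∨ (∀ a ∈ S, a ∉ D') := by
  obtain ⟨W, hW, hmiss⟩ := unsat_miss hU S hS
  by_cases hwW : w ∈ W
  · exact absurd hwW (hmiss w hwS)
  by_cases hnwW : -w ∈ W
  · rcases hnw_only W hW hnwW with rfl | rfl
    · exact Or.inl hmiss
    · exact Or.inr hmiss
  · exfalso
    have hne : C ≠ W := fun h => hwW (h ▸ hwC)
    obtain ⟨x, hxC, hxW⟩ := hU.2.1 C hC W hW hne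
    by_cases hxw : x = w
    · exact hnwW (hxw ▸ hxW)
    · exact hmiss (-x) (hcov x hxC hxw) hxW

lemma pair_other {α : Type*} [DecidableEq α] {s : Finset α} {C : α}
    (h : s.card = 2) (hC : C ∈ s) :
    ∃ C', C' ∈ s ∧ C' ≠ C ∧ ∀ W ∈ s, W = C ∨ W = C' := by
  obtain ⟨a, b, hab, rfl⟩ := Finset.card_eq_two.1 h
  rcases Finset.mem_insert.1 hC with rfl | hC
  · exact ⟨b, by simp, fun h => hab h.symm, fun W hW => by
      rcases Finset.mem_insert.1 hW with rfl | hW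
      · exact Or.inl rfl
      · exact Or.inr (Finset.mem_singleton.1 hW)⟩
  · rw [Finset.mem_singleton] at hC
    subst hC
    exact ⟨a, by simp, hab, fun W hW => by
      rcases Finset.mem_insert.1 hW with rfl | hW
      · exact Or.inr rfl
      · exact Or.inl (Finset.mem_singleton.1 hW)⟩

end Helpers
section CoreA

lemma coreA (F : Cls) (hU : UHit F) (v : ℤ) (hv0 : v ≠ 0)
    (C1 C2 D1 D2 : Finset ℤ)
    (hC1 : C1 ∈ F) (hC2 : C2 ∈ F) (hD1 : D1 ∈ F) (hD2 : D2 ∈ F)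
    (hvC1 : v ∈ C1) (hvC2 : v ∈ C2) (hnvD1 : -v ∈ D1) (hnvD2 : -v ∈ D2)
    (hD12 : D1 ≠ D2)
    (hv_only : ∀ W ∈ F, v ∈ W → W = C1 ∨ W = C2)
    (hnv_only : ∀ W ∈ F, -v ∈ W → W = D1 ∨ W = D2)
    (hnofs : ∀ G x, IsClause G → x ≠ 0 → x ∉ G → -x ∉ G →
      insert x G ∈ F → insert (-x) G ∈ F → False)
    (e11 : ∀ a ∈ C1, a ≠ v → -a ∉ D1) (e12 : ∀ a ∈ C1, a ≠ v → -a ∉ D2)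
    (ne21 : ∃ a ∈ C2, a ≠ v ∧ -a ∈ D1) :
    ∃ (E : Finset ℤ) (y : ℤ), IsClause E ∧ y ≠ 0 ∧ v ∉ E ∧ -v ∉ E ∧
      y ∉ E ∧ -y ∉ E ∧ y ≠ v ∧ y ≠ -v ∧
      insert v E ∈ F ∧ D1 = insert (-v) (insert y E) := by
  have hIC1 : IsClause C1 := hU.1 C1 hC1
  have hIC2 : IsClause C2 := hU.1 C2 hC2
  have hID1 : IsClause D1 := hU.1 D1 hD1
  have hID2 : IsClause D2 := hU.1 D2 hD2
  have hvD1 : v ∉ D1 := by have := neg_not_mem hID1 hnvD1; simpa using this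
  have hvD2 : v ∉ D2 := by have := neg_not_mem hID2 hnvD2; simpa using this
  have hnvC1 : -v ∉ C1 := neg_not_mem hIC1 hvC1
  have hnvC2 : -v ∉ C2 := neg_not_mem hIC2 hvC2
  have hnv0 : -v ≠ 0 := by omega
  have hv_only' : ∀ W ∈ F, -(-v) ∈ W → W = C1 ∨ W = C2 := by
    intro W hW h; exact hv_only W hW (by simpa using h)
  set A1 : Finset ℤ := C1.erase v with hA1def
  set P1 : Finset ℤ := D1.erase (-v) with hP1def
  have hIA1 : IsClause A1 := isClause_subset (Finset.erase_subset _ _) hIC1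
  have hIP1 : IsClause P1 := isClause_subset (Finset.erase_subset _ _) hID1
  have hInA1 : IsClause (negC A1) := isClause_negC hIA1
  have hInP1 : IsClause (negC P1) := isClause_negC hIP1
  have hbase1 : IsClause (insert (-v) (negC P1)) := by
    refine isClause_insert hnv0 ?_ hInP1
    rw [neg_neg, mem_negC]
    exact Finset.notMem_erase _ _
  have hbase2 : IsClause (insert v (negC A1)) := by
    refine isClause_insert hv0 ?_ hInA1
    rw [mem_negC, neg_neg]
    intro h
    exact (Finset.mem_erase.1 h).1 rfl
  -- Step a : A1 ⊆ P1
  have hsub : ∀ t ∈ C1, t ≠ v → t ∈ D1 := by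
    intro t ht htv
    by_cases htD1 : t ∈ D1
    · exact htD1
    exfalso
    have hSc : IsClause (insert t (insert (-v) (negC P1))) := by
      refine isClause_insert (mem_ne_zero hIC1 ht) ?_ hbase1
      intro h
      rcases Finset.mem_insert.1 h with h | h
      · exact htv (by omega)
      · rw [mem_negC, neg_neg] at h
        exact htD1 (Finset.mem_of_mem_erase h)
    have hkey := keyRow hU (-v) D1 C1 C2 hD1 hnvD1 hv_only'
      (insert t (insert (-v) (negC P1))) hSc
      (by simp)
      (fun a ha hav => Finset.mem_insert_of_mem (Finset.mem_insert_of_mem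
        (mem_negC.2 (by rw [neg_neg]; exact Finset.mem_erase.2 ⟨hav, ha⟩))))
    rcases hkey with h | h
    · exact h t (Finset.mem_insert_self _ _) ht
    · obtain ⟨a, haC2, hav, haD1⟩ := ne21
      have haP1 : -a ∈ P1 := Finset.mem_erase.2 ⟨by omega, haD1⟩
      exact h a (Finset.mem_insert_of_mem (Finset.mem_insert_of_mem
        (mem_negC.2 haP1))) haC2
  -- Step b : P1 has an element outside A1
  have hyEx : ∃ y, y ∈ D1 ∧ y ≠ -v ∧ y ∉ C1 := by
    by_contra hcon
    push_neg at hcon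
    have hD1eq : D1 = insert (-v) A1 := by
      apply Finset.ext
      intro t
      rw [Finset.mem_insert, hA1def, Finset.mem_erase]
      constructor
      · intro htD1
        by_cases ht : t = -v
        · exact Or.inl ht
        · exact Or.inr ⟨fun h => hvD1 (h ▸ htD1), hcon t htD1 ht⟩
      · rintro (rfl | ⟨htv, htC1⟩)
        · exact hnvD1
        · exact hsub t htC1 htv
    exact hnofs A1 v hIA1 hv0 (Finset.notMem_erase _ _)
      (fun h => hnvC1 (Finset.mem_of_mem_erase h))
      (by rwa [Finset.insert_erase hvC1]) (by rwa [← hD1eq])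
  obtain ⟨y, hyD1, hynv, hyC1⟩ := hyEx
  -- Step c : uniqueness
  have huniq : ∀ t1 t2, t1 ∈ D1 → t1 ≠ -v → t1 ∉ C1 →
      t2 ∈ D1 → t2 ≠ -v → t2 ∉ C1 → t1 = t2 := by
    intro t1 t2 h1D h1v h1C h2D h2v h2C
    by_contra hne
    have hB : ∀ b ∈ D2, b ≠ -v → b ∈ C1 := by
      intro b hbD2 hbv
      by_cases hbC1 : b ∈ C1
      · exact hbC1
      exfalso
      have hbv' : -b ≠ v := by omega
      set t : ℤ := if t1 = -b then t2 else t1 with htdef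
      have htfacts : t ∈ D1 ∧ t ≠ -v ∧ t ∉ C1 := by
        rw [htdef]; split_ifs
        · exact ⟨h2D, h2v, h2C⟩
        · exact ⟨h1D, h1v, h1C⟩
      have htnb : -b ≠ t := by
        rw [htdef]; split_ifs with hh
        · intro h; exact hne (by omega)
        · intro h; exact hh h.symm
      have hSt : IsClause (insert t (insert v (negC A1))) := by
        refine isClause_insert (mem_ne_zero hID1 htfacts.1) ?_ hbase2
        intro h
        rcases Finset.mem_insert.1 h with h | h
        · exact htfacts.2.1 (by omega)
        · rw [mem_negC, neg_neg] at h
          exact htfacts.2.2 (Finset.mem_of_mem_erase h)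
      have hSb : IsClause (insert b (insert t (insert v (negC A1)))) := by
        refine isClause_insert (mem_ne_zero hID2 hbD2) ?_ hSt
        intro h
        rcases Finset.mem_insert.1 h with h | h
        · exact htnb h
        rcases Finset.mem_insert.1 h with h | h
        · exact hbv (by omega)
        · rw [mem_negC, neg_neg] at h
          exact hbC1 (Finset.mem_of_mem_erase h)
      have hkey := keyRow hU v C1 D1 D2 hC1 hvC1 hnv_only
        (insert b (insert t (insert v (negC A1)))) hSb
        (by simp)
        (fun a ha hav => Finset.mem_insert_of_mem (Finset.mem_insert_of_mem
          (Finset.mem_insert_of_mem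
            (mem_negC.2 (by rw [neg_neg]; exact Finset.mem_erase.2 ⟨hav, ha⟩)))))
      rcases hkey with h | h
      · exact h t (Finset.mem_insert_of_mem (Finset.mem_insert_self _ _)) htfacts.1
      · exact h b (Finset.mem_insert_self _ _) hbD2
    obtain ⟨x, hxD1, hxD2⟩ := hU.2.1 D1 hD1 D2 hD2 hD12
    have hx1 : x ≠ -v := by
      intro h
      exact hvD2 (by rw [h] at hxD2; simpa using hxD2)
    have hx2 : -x ≠ -v := by
      intro h
      have hxv : x = v := by omega
      exact hvD1 (hxv ▸ hxD1)
    have hxC1 : -x ∈ C1 := hB (-x) hxD2 hx2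
    have hxv : -x ≠ v := by omega
    have := e11 (-x) hxC1 hxv
    rw [neg_neg] at this
    exact this hxD1
  -- assemble
  refine ⟨A1, y, hIA1, mem_ne_zero hID1 hyD1, Finset.notMem_erase _ _,
    fun h => hnvC1 (Finset.mem_of_mem_erase h), fun h => hyC1 (Finset.mem_of_mem_erase h),
    ?_, fun h => hvD1 (h ▸ hyD1), hynv, by rwa [Finset.insert_erase hvC1], ?_⟩
  · intro h
    have hyC1' : -y ∈ C1 := Finset.mem_of_mem_erase h
    have hyv : -y ≠ v := by
      intro hh; exact hynv (by omega)
    have := e11 (-y) hyC1' hyv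
    rw [neg_neg] at this
    exact this hyD1
  · apply Finset.ext
    intro t
    simp only [Finset.mem_insert]
    constructor
    · intro htD1
      by_cases h1 : t = -v
      · exact Or.inl h1
      by_cases h2 : t ∈ C1
      · exact Or.inr (Or.inr (Finset.mem_erase.2 ⟨fun h => hvD1 (h ▸ htD1), h2⟩))
      · exact Or.inr (Or.inl (huniq t y htD1 h1 h2 hyD1 hynv hyC1))
    · rintro (rfl | rfl | ht)
      · exact hnvD1
      · exact hyD1
      · exact hsub t (Finset.mem_of_mem_erase ht) (Finset.mem_erase.1 ht).1

end CoreA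
section K4

lemma edge_flip {C D : Finset ℤ} {v : ℤ} (h : ∀ a ∈ C, a ≠ v → -a ∉ D) :
    ∀ b ∈ D, b ≠ -v → -b ∉ C := by
  intro b hb hbv hbC
  have := h (-b) hbC (by omega)
  rw [neg_neg] at this
  exact this hb

lemma k4 (F : Cls) (hU : UHit F) (v : ℤ) (hv0 : v ≠ 0)
    (C1 C2 D1 D2 : Finset ℤ)
    (hC1 : C1 ∈ F) (hC2 : C2 ∈ F) (hD1 : D1 ∈ F) (hD2 : D2 ∈ F)
    (hvC1 : v ∈ C1) (hvC2 : v ∈ C2) (hnvD1 : -v ∈ D1) (hnvD2 : -v ∈ D2)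
    (hC12 : C1 ≠ C2) (hD12 : D1 ≠ D2)
    (hv_only : ∀ W ∈ F, v ∈ W → W = C1 ∨ W = C2)
    (hnv_only : ∀ W ∈ F, -v ∈ W → W = D1 ∨ W = D2)
    (hnofs : ∀ G x, IsClause G → x ≠ 0 → x ∉ G → -x ∉ G →
      insert x G ∈ F → insert (-x) G ∈ F → False)
    (e11 : ∀ a ∈ C1, a ≠ v → -a ∉ D1) (e12 : ∀ a ∈ C1, a ≠ v → -a ∉ D2)
    (e21 : ∀ a ∈ C2, a ≠ v → -a ∉ D1) (e22 : ∀ a ∈ C2, a ≠ v → -a ∉ D2) :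
    False := by
  have hIC1 : IsClause C1 := hU.1 C1 hC1
  have hIC2 : IsClause C2 := hU.1 C2 hC2
  have hID1 : IsClause D1 := hU.1 D1 hD1
  have hID2 : IsClause D2 := hU.1 D2 hD2
  have hvD1 : v ∉ D1 := by have := neg_not_mem hID1 hnvD1; simpa using this
  have hvD2 : v ∉ D2 := by have := neg_not_mem hID2 hnvD2; simpa using this
  have hnvC1 : -v ∉ C1 := neg_not_mem hIC1 hvC1
  have hnvC2 : -v ∉ C2 := neg_not_mem hIC2 hvC2
  have hnv0 : -v ≠ 0 := by omega
  have hv_only' : ∀ W ∈ F, -(-v) ∈ W → W = C1 ∨ W = C2 := by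
    intro W hW h; exact hv_only W hW (by simpa using h)
  have t11 := edge_flip e11
  have t12 := edge_flip e12
  have t21 := edge_flip e21
  have t22 := edge_flip e22
  -- clash literal of C1, C2
  obtain ⟨u, hu1, hu2⟩ := hU.2.1 C1 hC1 C2 hC2 hC12
  have huv : u ≠ v := fun h => hnvC2 (h ▸ hu2)
  have hunv : u ≠ -v := fun h => hnvC1 (h ▸ hu1)
  -- clash literal of D1, D2
  obtain ⟨w, hw1, hw2⟩ := hU.2.1 D1 hD1 D2 hD2 hD12
  have hwnv : w ≠ -v := by
    intro h
    exact hvD2 (by rw [h] at hw2; simpa using hw2)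
  have hnwnv : -w ≠ -v := by
    intro h
    have : w = v := by omega
    exact hvD1 (this ▸ hw1)
  -- generic row claim: a ∈ Ci, a ≠ v, a ≠ u' → a ∈ Dj
  have hA12 : ∀ (Ci Co Dj : Finset ℤ) (u' : ℤ), Ci ∈ F → Dj ∈ F → v ∈ Ci → -v ∈ Dj →
      u' ∈ Ci → -u' ∈ Co → Co ∈ F → v ∈ Co →
      ((Ci = C1 ∧ Co = C2) ∨ (Ci = C2 ∧ Co = C1)) →
      (∀ a ∈ Ci, a ≠ v → -a ∉ Dj) → (∀ b ∈ Dj, b ≠ -v → -b ∉ Co) →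
      ∀ a ∈ Ci, a ≠ v → a ≠ u' → a ∈ Dj := by
    intro Ci Co Dj u' hCiF hDjF hvCi hnvDj hu'Ci hnu'Co hCoF hvCo horder eij toj a ha hav hau
    by_cases haDj : a ∈ Dj
    · exact haDj
    exfalso
    have hICi : IsClause Ci := hU.1 _ hCiF
    have hIDj : IsClause Dj := hU.1 _ hDjF
    have hICo : IsClause Co := hU.1 _ hCoF
    have hu'0 : u' ≠ 0 := mem_ne_zero hICi hu'Ci
    have hnvCi : -v ∉ Ci := neg_not_mem hICi hvCi
    have hu'nv : u' ≠ -v := fun h => hnvCi (h ▸ hu'Ci)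
    have hu'v : u' ≠ v := fun h =>
      (neg_not_mem hICo hvCo) (by rw [h] at hnu'Co; exact hnu'Co)
    have hInPj : IsClause (negC (Dj.erase (-v))) :=
      isClause_negC (isClause_subset (Finset.erase_subset _ _) hIDj)
    have hb1 : IsClause (insert (-v) (negC (Dj.erase (-v)))) := by
      refine isClause_insert hnv0 ?_ hInPj
      rw [neg_neg, mem_negC]
      exact Finset.notMem_erase _ _
    have hb2 : IsClause (insert (-u') (insert (-v) (negC (Dj.erase (-v))))) := by
      refine isClause_insert (by omega) ?_ hb1
      rw [neg_neg]
      intro h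
      rcases Finset.mem_insert.1 h with h | h
      · exact hu'nv h
      · rw [mem_negC] at h
        have : -u' ∈ Dj := Finset.mem_of_mem_erase h
        exact eij u' hu'Ci hu'v this
    have hb3 : IsClause (insert a (insert (-u') (insert (-v) (negC (Dj.erase (-v)))))) := by
      refine isClause_insert (mem_ne_zero hICi ha) ?_ hb2
      intro h
      rcases Finset.mem_insert.1 h with h | h
      · exact hau (by omega)
      rcases Finset.mem_insert.1 h with h | h
      · exact hav (by omega)
      · rw [mem_negC, neg_neg] at h
        exact haDj (Finset.mem_of_mem_erase h)
    have hkey := keyRow hU (-v) Dj C1 C2 hDjF hnvDj hv_only'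
      _ hb3 (by simp)
      (fun b hb hbv => Finset.mem_insert_of_mem (Finset.mem_insert_of_mem
        (Finset.mem_insert_of_mem (mem_negC.2 (by
          rw [neg_neg]; exact Finset.mem_erase.2 ⟨hbv, hb⟩)))))
    have haS : a ∈ insert a (insert (-u') (insert (-v) (negC (Dj.erase (-v))))) :=
      Finset.mem_insert_self _ _
    have hu'S : -u' ∈ insert a (insert (-u') (insert (-v) (negC (Dj.erase (-v))))) :=
      Finset.mem_insert_of_mem (Finset.mem_insert_self _ _)
    rcases horder with ⟨h1, h2⟩ | ⟨h1, h2⟩ <;> subst h1 <;> subst h2 <;>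
      rcases hkey with h | h
    · exact h a haS ha
    · exact h (-u') hu'S hnu'Co
    · exact h (-u') hu'S hnu'Co
    · exact h a haS ha
  -- generic column claim: p ∈ Dj, p ≠ -v, p ≠ w' → p ∈ Ci
  have hP12 : ∀ (Dj Do Ci : Finset ℤ) (w' : ℤ), Dj ∈ F → Ci ∈ F → -v ∈ Dj → v ∈ Ci →
      w' ∈ Dj → -w' ∈ Do → Do ∈ F → -v ∈ Do →
      ((Dj = D1 ∧ Do = D2) ∨ (Dj = D2 ∧ Do = D1)) →
      (∀ b ∈ Dj, b ≠ -v → -b ∉ Ci) → (∀ a ∈ Ci, a ≠ v → -a ∉ Do) →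
      ∀ p ∈ Dj, p ≠ -v → p ≠ w' → p ∈ Ci := by
    intro Dj Do Ci w' hDjF hCiF hnvDj hvCi hw'Dj hnw'Do hDoF hnvDo horder tji eio p hp hpv hpw
    by_cases hpCi : p ∈ Ci
    · exact hpCi
    exfalso
    have hICi : IsClause Ci := hU.1 _ hCiF
    have hIDj : IsClause Dj := hU.1 _ hDjF
    have hIDo : IsClause Do := hU.1 _ hDoF
    have hw'0 : w' ≠ 0 := mem_ne_zero hIDj hw'Dj
    have hvDj : v ∉ Dj := by have := neg_not_mem hIDj hnvDj; simpa using this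
    have hvDo : v ∉ Do := by have := neg_not_mem hIDo hnvDo; simpa using this
    have hw'v : w' ≠ v := fun h => hvDj (h ▸ hw'Dj)
    have hw'nv : w' ≠ -v := fun h => hvDo (by rw [h] at hnw'Do; simpa using hnw'Do)
    have hInAi : IsClause (negC (Ci.erase v)) :=
      isClause_negC (isClause_subset (Finset.erase_subset _ _) hICi)
    have hb1 : IsClause (insert v (negC (Ci.erase v))) := by
      refine isClause_insert hv0 ?_ hInAi
      rw [mem_negC, neg_neg]
      intro h
      exact (Finset.mem_erase.1 h).1 rfl
    have hb2 : IsClause (insert (-w') (insert v (negC (Ci.erase v)))) := by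
      refine isClause_insert (by omega) ?_ hb1
      rw [neg_neg]
      intro h
      rcases Finset.mem_insert.1 h with h | h
      · exact hw'v h
      · rw [mem_negC] at h
        have : -w' ∈ Ci := Finset.mem_of_mem_erase h
        exact tji w' hw'Dj hw'nv this
    have hb3 : IsClause (insert p (insert (-w') (insert v (negC (Ci.erase v))))) := by
      refine isClause_insert (mem_ne_zero hIDj hp) ?_ hb2
      intro h
      rcases Finset.mem_insert.1 h with h | h
      · exact hpw (by omega)
      rcases Finset.mem_insert.1 h with h | h
      · exact hpv (by omega)
      · rw [mem_negC, neg_neg] at h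
        exact hpCi (Finset.mem_of_mem_erase h)
    have hkey := keyRow hU v Ci D1 D2 hCiF hvCi hnv_only
      _ hb3 (by simp)
      (fun b hb hbv => Finset.mem_insert_of_mem (Finset.mem_insert_of_mem
        (Finset.mem_insert_of_mem (mem_negC.2 (by
          rw [neg_neg]; exact Finset.mem_erase.2 ⟨hbv, hb⟩)))))
    have hpS : p ∈ insert p (insert (-w') (insert v (negC (Ci.erase v)))) :=
      Finset.mem_insert_self _ _
    have hwS : -w' ∈ insert p (insert (-w') (insert v (negC (Ci.erase v)))) :=
      Finset.mem_insert_of_mem (Finset.mem_insert_self _ _)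
    rcases horder with ⟨h1, h2⟩ | ⟨h1, h2⟩ <;> subst h1 <;> subst h2 <;>
      rcases hkey with h | h
    · exact h p hpS hp
    · exact h (-w') hwS hnw'Do
    · exact h (-w') hwS hnw'Do
    · exact h p hpS hp
  -- w ∉ C1, w ∉ C2
  have hwC1 : w ∉ C1 := by
    intro h
    exact t12 (-w) hw2 hnwnv (by rwa [neg_neg])
  have hwC2 : w ∉ C2 := by
    intro h
    exact t22 (-w) hw2 hnwnv (by rwa [neg_neg])
  -- final: C2 = insert (-u) (C1.erase u)
  have hEq : insert (-u) (C1.erase u) = C2 := by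
    apply Finset.ext
    intro t
    rw [Finset.mem_insert, Finset.mem_erase]
    constructor
    · rintro (rfl | ⟨htu, htC1⟩)
      · exact hu2
      by_cases htv : t = v
      · exact htv ▸ hvC2
      have htD1 : t ∈ D1 := hA12 C1 C2 D1 u hC1 hD1 hvC1 hnvD1 hu1 hu2 hC2 hvC2
        (Or.inl ⟨rfl, rfl⟩) e11 t21 t htC1 htv htu
      have htnv : t ≠ -v := fun h => hnvC1 (h ▸ htC1)
      have htw : t ≠ w := fun h => hwC1 (h ▸ htC1)
      exact hP12 D1 D2 C2 w hD1 hC2 hnvD1 hvC2 hw1 hw2 hD2 hnvD2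
        (Or.inl ⟨rfl, rfl⟩) t21 e22 t htD1 htnv htw
    · intro htC2
      by_cases htnu : t = -u
      · exact Or.inl htnu
      by_cases htv : t = v
      · exact Or.inr ⟨by rw [htv]; omega, htv ▸ hvC1⟩
      have htD1 : t ∈ D1 := hA12 C2 C1 D1 (-u) hC2 hD1 hvC2 hnvD1 hu2
        (by rwa [neg_neg]) hC1 hvC1 (Or.inr ⟨rfl, rfl⟩) e21 t11 t htC2 htv htnu
      have htnv : t ≠ -v := fun h => hnvC2 (h ▸ htC2)
      have htw : t ≠ w := fun h => hwC2 (h ▸ htC2)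
      have htC1 : t ∈ C1 := hP12 D1 D2 C1 w hD1 hC1 hnvD1 hvC1 hw1 hw2 hD2 hnvD2
        (Or.inl ⟨rfl, rfl⟩) t11 e12 t htD1 htnv htw
      have htu : t ≠ u := fun h => (neg_not_mem hIC2 (h ▸ htC2)) hu2
      exact Or.inr ⟨htu, htC1⟩
  exact hnofs (C1.erase u) u (isClause_subset (Finset.erase_subset _ _) hIC1)
    (mem_ne_zero hIC1 hu1) (Finset.notMem_erase _ _)
    (fun h => neg_not_mem hIC1 hu1 (Finset.mem_of_mem_erase h))
    (by rwa [Finset.insert_erase hu1]) (by rwa [hEq])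

end K4
section PartA

lemma edge_flip' {C D : Finset ℤ} {v : ℤ} (h : ∀ b ∈ D, b ≠ -v → -b ∉ C) :
    ∀ a ∈ C, a ≠ v → -a ∉ D :=
  fun a ha hav => edge_flip h a ha (by simpa using hav)

lemma rowDichot (F : Cls) (hU : UHit F) (v : ℤ) (hv0 : v ≠ 0)
    (C D1 D2 : Finset ℤ) (hCF : C ∈ F) (hvC : v ∈ C)
    (hnv_only : ∀ W ∈ F, -v ∈ W → W = D1 ∨ W = D2) :
    (∀ a ∈ C, a ≠ v → -a ∉ D1) ∨ (∀ a ∈ C, a ≠ v → -a ∉ D2) := by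
  have hIC : IsClause C := hU.1 C hCF
  have hS : IsClause (insert v (negC (C.erase v))) := by
    refine isClause_insert hv0 ?_ (isClause_negC (isClause_subset (Finset.erase_subset _ _) hIC))
    rw [mem_negC, neg_neg]
    intro h
    exact (Finset.mem_erase.1 h).1 rfl
  have hkey := keyRow hU v C D1 D2 hCF hvC hnv_only _ hS (Finset.mem_insert_self _ _)
    (fun a ha hav => Finset.mem_insert_of_mem (mem_negC.2 (by
      rw [neg_neg]; exact Finset.mem_erase.2 ⟨hav, ha⟩)))
  rcases hkey with h | h
  · exact Or.inl (fun a ha hav => h (-a) (Finset.mem_insert_of_mem (mem_negC.2 (by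
      rw [neg_neg]; exact Finset.mem_erase.2 ⟨hav, ha⟩))))
  · exact Or.inr (fun a ha hav => h (-a) (Finset.mem_insert_of_mem (mem_negC.2 (by
      rw [neg_neg]; exact Finset.mem_erase.2 ⟨hav, ha⟩))))

lemma colDichot (F : Cls) (hU : UHit F) (v : ℤ) (hv0 : v ≠ 0)
    (D C1 C2 : Finset ℤ) (hDF : D ∈ F) (hnvD : -v ∈ D)
    (hv_only : ∀ W ∈ F, v ∈ W → W = C1 ∨ W = C2) :
    (∀ b ∈ D, b ≠ -v → -b ∉ C1) ∨ (∀ b ∈ D, b ≠ -v → -b ∉ C2) := by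
  have hID : IsClause D := hU.1 D hDF
  have hv_only' : ∀ W ∈ F, -(-v) ∈ W → W = C1 ∨ W = C2 := by
    intro W hW h; exact hv_only W hW (by simpa using h)
  have hS : IsClause (insert (-v) (negC (D.erase (-v)))) := by
    refine isClause_insert (by omega) ?_
      (isClause_negC (isClause_subset (Finset.erase_subset _ _) hID))
    rw [neg_neg, mem_negC]
    exact Finset.notMem_erase _ _
  have hkey := keyRow hU (-v) D C1 C2 hDF hnvD hv_only' _ hS (Finset.mem_insert_self _ _)
    (fun a ha hav => Finset.mem_insert_of_mem (mem_negC.2 (by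
      rw [neg_neg]; exact Finset.mem_erase.2 ⟨hav, ha⟩)))
  rcases hkey with h | h
  · exact Or.inl (fun b hb hbv => h (-b) (Finset.mem_insert_of_mem (mem_negC.2 (by
      rw [neg_neg]; exact Finset.mem_erase.2 ⟨hbv, hb⟩))))
  · exact Or.inr (fun b hb hbv => h (-b) (Finset.mem_insert_of_mem (mem_negC.2 (by
      rw [neg_neg]; exact Finset.mem_erase.2 ⟨hbv, hb⟩))))

lemma rowSingleton (F : Cls) (hU : UHit F) (v : ℤ) (hv0 : v ≠ 0)
    (C Dm Do : Finset ℤ) (hCF : C ∈ F) (hvC : v ∈ C) (hDoF : Do ∈ F) (hnvDo : -v ∈ Do)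
    (hnv_only2 : ∀ W ∈ F, -v ∈ W → W = Dm ∨ W = Do)
    (hne : ∃ a ∈ C, a ≠ v ∧ -a ∈ Dm)
    (eCDo : ∀ a ∈ C, a ≠ v → -a ∉ Do) :
    ∀ t ∈ Do, t ≠ -v → t ∈ C := by
  intro t ht htv
  by_cases htC : t ∈ C
  · exact htC
  exfalso
  have hIC : IsClause C := hU.1 C hCF
  have hIDo : IsClause Do := hU.1 Do hDoF
  have hSb : IsClause (insert v (negC (C.erase v))) := by
    refine isClause_insert hv0 ?_ (isClause_negC (isClause_subset (Finset.erase_subset _ _) hIC))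
    rw [mem_negC, neg_neg]
    intro h
    exact (Finset.mem_erase.1 h).1 rfl
  have hS : IsClause (insert t (insert v (negC (C.erase v)))) := by
    refine isClause_insert (mem_ne_zero hIDo ht) ?_ hSb
    intro h
    rcases Finset.mem_insert.1 h with h | h
    · exact htv (by omega)
    · rw [mem_negC, neg_neg] at h
      exact htC (Finset.mem_of_mem_erase h)
  have hkey := keyRow hU v C Dm Do hCF hvC hnv_only2 _ hS
    (Finset.mem_insert_of_mem (Finset.mem_insert_self _ _))
    (fun a ha hav => Finset.mem_insert_of_mem (Finset.mem_insert_of_mem (mem_negC.2 (by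
      rw [neg_neg]; exact Finset.mem_erase.2 ⟨hav, ha⟩))))
  rcases hkey with h | h
  · obtain ⟨a, haC, hav, haDm⟩ := hne
    exact h (-a) (Finset.mem_insert_of_mem (Finset.mem_insert_of_mem (mem_negC.2 (by
      rw [neg_neg]; exact Finset.mem_erase.2 ⟨hav, haC⟩)))) haDm
  · exact h t (Finset.mem_insert_self _ _) ht

lemma colSingleton (F : Cls) (hU : UHit F) (v : ℤ) (hv0 : v ≠ 0)
    (D Cm Co : Finset ℤ) (hDF : D ∈ F) (hnvD : -v ∈ D) (hCoF : Co ∈ F) (hvCo : v ∈ Co)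
    (hv_only2 : ∀ W ∈ F, v ∈ W → W = Cm ∨ W = Co)
    (hne : ∃ b ∈ D, b ≠ -v ∧ -b ∈ Cm)
    (eCoD : ∀ a ∈ Co, a ≠ v → -a ∉ D) :
    ∀ t ∈ Co, t ≠ v → t ∈ D := by
  intro t ht htv
  by_cases htD : t ∈ D
  · exact htD
  exfalso
  have hID : IsClause D := hU.1 D hDF
  have hICo : IsClause Co := hU.1 Co hCoF
  have hv_only' : ∀ W ∈ F, -(-v) ∈ W → W = Cm ∨ W = Co := by
    intro W hW h; exact hv_only2 W hW (by simpa using h)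
  have hSb : IsClause (insert (-v) (negC (D.erase (-v)))) := by
    refine isClause_insert (by omega) ?_
      (isClause_negC (isClause_subset (Finset.erase_subset _ _) hID))
    rw [neg_neg, mem_negC]
    exact Finset.notMem_erase _ _
  have hS : IsClause (insert t (insert (-v) (negC (D.erase (-v))))) := by
    refine isClause_insert (mem_ne_zero hICo ht) ?_ hSb
    intro h
    rcases Finset.mem_insert.1 h with h | h
    · exact htv (by omega)
    · rw [mem_negC, neg_neg] at h
      exact htD (Finset.mem_of_mem_erase h)
  have hkey := keyRow hU (-v) D Cm Co hDF hnvD hv_only' _ hS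
    (Finset.mem_insert_of_mem (Finset.mem_insert_self _ _))
    (fun a ha hav => Finset.mem_insert_of_mem (Finset.mem_insert_of_mem (mem_negC.2 (by
      rw [neg_neg]; exact Finset.mem_erase.2 ⟨hav, ha⟩))))
  rcases hkey with h | h
  · obtain ⟨b, hbD, hbv, hbCm⟩ := hne
    exact h (-b) (Finset.mem_insert_of_mem (Finset.mem_insert_of_mem (mem_negC.2 (by
      rw [neg_neg]; exact Finset.mem_erase.2 ⟨hbv, hbD⟩)))) hbCm
  · exact h t (Finset.mem_insert_self _ _) ht

lemma partA (F : Cls) (hU : UHit F) (v : ℤ) (hv0 : v ≠ 0)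
    (h1 : ldeg F v = 2) (h2 : ldeg F (-v) = 2)
    (hnofs : ∀ G x, IsClause G → x ≠ 0 → x ∉ G → -x ∉ G →
      insert x G ∈ F → insert (-x) G ∈ F → False) :
    ∃ (E : Finset ℤ) (y : ℤ), IsClause E ∧ y ≠ 0 ∧ v ∉ E ∧ -v ∉ E ∧
      y ∉ E ∧ -y ∉ E ∧ y ≠ v ∧ y ≠ -v ∧
      insert v E ∈ F ∧ insert (-v) (insert y E) ∈ F := by
  classical
  -- extract the two v-clauses
  have hpos : (0:ℕ) < (F.filter (fun C => v ∈ C)).card := by rw [ldeg] at h1; omega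
  obtain ⟨C1, hC1f⟩ := Finset.card_pos.1 hpos
  obtain ⟨C2, hC2f, hC21, hvonly⟩ := pair_other h1 hC1f
  have hC1 : C1 ∈ F := (Finset.mem_filter.1 hC1f).1
  have hvC1 : v ∈ C1 := (Finset.mem_filter.1 hC1f).2
  have hC2 : C2 ∈ F := (Finset.mem_filter.1 hC2f).1
  have hvC2 : v ∈ C2 := (Finset.mem_filter.1 hC2f).2
  have hv_only : ∀ W ∈ F, v ∈ W → W = C1 ∨ W = C2 :=
    fun W hW h => hvonly W (Finset.mem_filter.2 ⟨hW, h⟩)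
  have hv_only2 : ∀ W ∈ F, v ∈ W → W = C2 ∨ W = C1 :=
    fun W hW h => (hv_only W hW h).symm
  have hpos2 : (0:ℕ) < (F.filter (fun C => -v ∈ C)).card := by rw [ldeg] at h2; omega
  obtain ⟨D1, hD1f⟩ := Finset.card_pos.1 hpos2
  obtain ⟨D2, hD2f, hD21, hnvonly⟩ := pair_other h2 hD1f
  have hD1 : D1 ∈ F := (Finset.mem_filter.1 hD1f).1
  have hnvD1 : -v ∈ D1 := (Finset.mem_filter.1 hD1f).2
  have hD2 : D2 ∈ F := (Finset.mem_filter.1 hD2f).1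
  have hnvD2 : -v ∈ D2 := (Finset.mem_filter.1 hD2f).2
  have hnv_only : ∀ W ∈ F, -v ∈ W → W = D1 ∨ W = D2 :=
    fun W hW h => hnvonly W (Finset.mem_filter.2 ⟨hW, h⟩)
  have hnv_only2 : ∀ W ∈ F, -v ∈ W → W = D2 ∨ W = D1 :=
    fun W hW h => (hnv_only W hW h).symm
  have hD12 : D1 ≠ D2 := Ne.symm hD21
  have hC12 : C1 ≠ C2 := Ne.symm hC21
  -- fs-from-double-containment helper
  have mkfs : ∀ (C D : Finset ℤ), C ∈ F → D ∈ F → v ∈ C → -v ∈ D →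
      (∀ t ∈ D, t ≠ -v → t ∈ C) → (∀ t ∈ C, t ≠ v → t ∈ D) → False := by
    intro C D hCF hDF hvC hnvD hDC hCD
    have hIC : IsClause C := hU.1 C hCF
    have hID : IsClause D := hU.1 D hDF
    have hvD : v ∉ D := by have := neg_not_mem hID hnvD; simpa using this
    have hEq : D = insert (-v) (C.erase v) := by
      apply Finset.ext
      intro t
      rw [Finset.mem_insert, Finset.mem_erase]
      constructor
      · intro htD
        by_cases ht : t = -v
        · exact Or.inl ht
        · exact Or.inr ⟨fun h => hvD (h ▸ htD), hDC t htD ht⟩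
      · rintro (rfl | ⟨htv, htC⟩)
        · exact hnvD
        · exact hCD t htC htv
    exact hnofs (C.erase v) v (isClause_subset (Finset.erase_subset _ _) hIC) hv0
      (Finset.notMem_erase _ _)
      (fun h => neg_not_mem hIC hvC (Finset.mem_of_mem_erase h))
      (by rwa [Finset.insert_erase hvC]) (by rwa [← hEq])
  by_cases e11 : ∀ a ∈ C1, a ≠ v → -a ∉ D1
  · by_cases e21 : ∀ a ∈ C2, a ≠ v → -a ∉ D1
    · by_cases e12 : ∀ a ∈ C1, a ≠ v → -a ∉ D2
      · by_cases e22 : ∀ a ∈ C2, a ≠ v → -a ∉ D2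
        · exact (k4 F hU v hv0 C1 C2 D1 D2 hC1 hC2 hD1 hD2 hvC1 hvC2 hnvD1 hnvD2
            hC12 hD12 hv_only hnv_only hnofs e11 e12 e21 e22).elim
        · -- only e22 missing : coreA (C1, C2, D2, D1)
          push_neg at e22
          obtain ⟨a, ha, hav, haD⟩ := e22
          obtain ⟨E, y, p1, p2, p3, p4, p5, p6, p7, p8, p9, p10⟩ :=
            coreA F hU v hv0 C1 C2 D2 D1 hC1 hC2 hD2 hD1 hvC1 hvC2 hnvD2 hnvD1
              (Ne.symm hD12) hv_only hnv_only2 hnofs e12 e11 ⟨a, ha, hav, haD⟩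
          exact ⟨E, y, p1, p2, p3, p4, p5, p6, p7, p8, p9, p10 ▸ hD2⟩
      · by_cases e22 : ∀ a ∈ C2, a ≠ v → -a ∉ D2
        · -- only e12 missing : coreA (C2, C1, D2, D1)
          push_neg at e12
          obtain ⟨a, ha, hav, haD⟩ := e12
          obtain ⟨E, y, p1, p2, p3, p4, p5, p6, p7, p8, p9, p10⟩ :=
            coreA F hU v hv0 C2 C1 D2 D1 hC2 hC1 hD2 hD1 hvC2 hvC1 hnvD2 hnvD1
              (Ne.symm hD12) hv_only2 hnv_only2 hnofs e22 e21 ⟨a, ha, hav, haD⟩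
          exact ⟨E, y, p1, p2, p3, p4, p5, p6, p7, p8, p9, p10 ▸ hD2⟩
        · -- e12, e22 both missing : column D2 dichotomy contradiction
          rcases colDichot F hU v hv0 D2 C1 C2 hD2 hnvD2 hv_only with h | h
          · exact absurd (edge_flip' h) e12
          · exact absurd (edge_flip' h) e22
    · by_cases e12 : ∀ a ∈ C1, a ≠ v → -a ∉ D2
      · -- e21 missing : coreA (C1, C2, D1, D2)
        push_neg at e21
        obtain ⟨a, ha, hav, haD⟩ := e21
        obtain ⟨E, y, p1, p2, p3, p4, p5, p6, p7, p8, p9, p10⟩ :=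
          coreA F hU v hv0 C1 C2 D1 D2 hC1 hC2 hD1 hD2 hvC1 hvC2 hnvD1 hnvD2
            hD12 hv_only hnv_only hnofs e11 e12 ⟨a, ha, hav, haD⟩
        exact ⟨E, y, p1, p2, p3, p4, p5, p6, p7, p8, p9, p10 ▸ hD1⟩
      · -- e21, e12 missing; e11 present; derive e22 then matching fs on (C1, D1)
        have e22 : ∀ a ∈ C2, a ≠ v → -a ∉ D2 := by
          rcases rowDichot F hU v hv0 C2 D1 D2 hC2 hvC2 hnv_only with h | h
          · exact absurd h e21
          · exact h
        push_neg at e12 e21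
        obtain ⟨a, ha, hav, haD⟩ := e12
        obtain ⟨b, hb, hbv, hbD⟩ := e21
        have hDC : ∀ t ∈ D1, t ≠ -v → t ∈ C1 :=
          rowSingleton F hU v hv0 C1 D2 D1 hC1 hvC1 hD1 hnvD1 hnv_only2
            ⟨a, ha, hav, haD⟩ e11
        have hCD : ∀ t ∈ C1, t ≠ v → t ∈ D1 := by
          refine colSingleton F hU v hv0 D1 C2 C1 hD1 hnvD1 hC1 hvC1 hv_only2 ?_ e11
          exact ⟨-b, hbD, by omega, by rwa [neg_neg]⟩
        exact (mkfs C1 D1 hC1 hD1 hvC1 hnvD1 hDC hCD).elim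
  · -- e11 missing
    have e12 : ∀ a ∈ C1, a ≠ v → -a ∉ D2 := by
      rcases rowDichot F hU v hv0 C1 D1 D2 hC1 hvC1 hnv_only with h | h
      · exact absurd h e11
      · exact h
    have e21 : ∀ a ∈ C2, a ≠ v → -a ∉ D1 := by
      rcases colDichot F hU v hv0 D1 C1 C2 hD1 hnvD1 hv_only with h | h
      · exact absurd (edge_flip' h) e11
      · exact edge_flip' h
    by_cases e22 : ∀ a ∈ C2, a ≠ v → -a ∉ D2
    · -- only e11 missing : coreA (C2, C1, D1, D2)
      push_neg at e11
      obtain ⟨a, ha, hav, haD⟩ := e11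
      obtain ⟨E, y, p1, p2, p3, p4, p5, p6, p7, p8, p9, p10⟩ :=
        coreA F hU v hv0 C2 C1 D1 D2 hC2 hC1 hD1 hD2 hvC2 hvC1 hnvD1 hnvD2
          hD12 hv_only2 hnv_only hnofs e21 e22 ⟨a, ha, hav, haD⟩
      exact ⟨E, y, p1, p2, p3, p4, p5, p6, p7, p8, p9, p10 ▸ hD1⟩
    · -- e11, e22 missing; e12, e21 present: matching fs on (C1, D2)
      push_neg at e11 e22
      obtain ⟨a, ha, hav, haD⟩ := e11
      obtain ⟨b, hb, hbv, hbD⟩ := e22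
      have hDC : ∀ t ∈ D2, t ≠ -v → t ∈ C1 :=
        rowSingleton F hU v hv0 C1 D1 D2 hC1 hvC1 hD2 hnvD2 hnv_only
          ⟨a, ha, hav, haD⟩ e12
      have hCD : ∀ t ∈ C1, t ≠ v → t ∈ D2 := by
        refine colSingleton F hU v hv0 D2 C2 C1 hD2 hnvD2 hC1 hvC1 hv_only2 ?_ e12
        exact ⟨-b, hbD, by omega, by rwa [neg_neg]⟩
      exact (mkfs C1 D2 hC1 hD2 hvC1 hnvD2 hDC hCD).elim

end PartA
section PartB

lemma partB (F : Cls) (hU : UHit F) (v y : ℤ) (E : Finset ℤ)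
    (hE : IsClause E) (hv0 : v ≠ 0) (hy0 : y ≠ 0)
    (hvE : v ∉ E) (hnvE : -v ∉ E) (hyE : y ∉ E) (hnyE : -y ∉ E)
    (hyv : y ≠ v) (hynv : y ≠ -v)
    (hC1F : insert v E ∈ F) (hD1F : insert (-v) (insert y E) ∈ F)
    (h1 : ldeg F v = 2) (h2 : ldeg F (-v) = 2)
    (hnofs : ∀ G x, IsClause G → x ≠ 0 → x ∉ G → -x ∉ G →
      insert x G ∈ F → insert (-x) G ∈ F → False) :
    ∃ F', NfsFlip F F' ∧ ∃ P ⊆ F', IsFsPair P := by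
  classical
  obtain ⟨C1, hC1def⟩ : ∃ X, X = insert v E := ⟨_, rfl⟩
  obtain ⟨D1, hD1def⟩ : ∃ X, X = insert (-v) (insert y E) := ⟨_, rfl⟩
  obtain ⟨Cp, hCpdef⟩ : ∃ X, X = insert (-y) (insert v E) := ⟨_, rfl⟩
  obtain ⟨Dp, hDpdef⟩ : ∃ X, X = insert y E := ⟨_, rfl⟩
  rw [← hC1def] at hC1F
  rw [← hD1def] at hD1F
  have hny0 : -y ≠ 0 := by omega
  have hnv0 : -v ≠ 0 := by omega
  have mem_C1 : ∀ t, t ∈ C1 ↔ t = v ∨ t ∈ E := by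
    intro t; rw [hC1def]; simp [Finset.mem_insert]
  have mem_D1 : ∀ t, t ∈ D1 ↔ t = -v ∨ t = y ∨ t ∈ E := by
    intro t; rw [hD1def]; simp [Finset.mem_insert]
  have mem_Cp : ∀ t, t ∈ Cp ↔ t = -y ∨ t = v ∨ t ∈ E := by
    intro t; rw [hCpdef]; simp [Finset.mem_insert]
  have mem_Dp : ∀ t, t ∈ Dp ↔ t = y ∨ t ∈ E := by
    intro t; rw [hDpdef]; simp [Finset.mem_insert]
  have hvC1 : v ∈ C1 := (mem_C1 v).2 (Or.inl rfl)
  have hnvD1 : -v ∈ D1 := (mem_D1 (-v)).2 (Or.inl rfl)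
  have hyD1 : y ∈ D1 := (mem_D1 y).2 (Or.inr (Or.inl rfl))
  have hyDp : y ∈ Dp := (mem_Dp y).2 (Or.inl rfl)
  have hnyCp : -y ∈ Cp := (mem_Cp (-y)).2 (Or.inl rfl)
  have hvCp : v ∈ Cp := (mem_Cp v).2 (Or.inr (Or.inl rfl))
  have hIC1 : IsClause C1 := hC1def ▸ isClause_insert hv0 hnvE hE
  have hIDp : IsClause Dp := hDpdef ▸ isClause_insert hy0 hnyE hE
  have hID1 : IsClause D1 := by
    rw [hD1def]
    refine isClause_insert hnv0 ?_ (isClause_insert hy0 hnyE hE)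
    rw [neg_neg]
    intro h
    rcases Finset.mem_insert.1 h with h | h
    · exact hyv h.symm
    · exact hvE h
  have hICp : IsClause Cp := by
    rw [hCpdef]
    refine isClause_insert hny0 ?_ (isClause_insert hv0 hnvE hE)
    rw [neg_neg]
    intro h
    rcases Finset.mem_insert.1 h with h | h
    · exact hyv h
    · exact hyE h
  have hvD1 : v ∉ D1 := by
    intro h
    rcases (mem_D1 v).1 h with h | h | h
    · omega
    · exact hyv h.symm
    · exact hvE h
  have hnvC1 : -v ∉ C1 := by
    intro h
    rcases (mem_C1 (-v)).1 h with h | h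
    · omega
    · exact hnvE h
  have hnyD1 : -y ∉ D1 := by
    intro h
    rcases (mem_D1 (-y)).1 h with h | h | h
    · exact hynv (by omega)
    · omega
    · exact hnyE h
  have hyC1 : y ∉ C1 := by
    intro h
    rcases (mem_C1 y).1 h with h | h
    · exact hyv h
    · exact hyE h
  have hnyC1 : -y ∉ C1 := by
    intro h
    rcases (mem_C1 (-y)).1 h with h | h
    · exact hynv (by omega)
    · exact hnyE h
  have hC1D1 : C1 ≠ D1 := fun h => hvD1 (h ▸ hvC1)
  -- the two companion clauses
  obtain ⟨C2, hC2f, hC21, hvonly⟩ := pair_other h1 (Finset.mem_filter.2 ⟨hC1F, hvC1⟩)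
  have hC2F : C2 ∈ F := (Finset.mem_filter.1 hC2f).1
  have hvC2 : v ∈ C2 := (Finset.mem_filter.1 hC2f).2
  have hv_only : ∀ W ∈ F, v ∈ W → W = C1 ∨ W = C2 :=
    fun W hW h => hvonly W (Finset.mem_filter.2 ⟨hW, h⟩)
  obtain ⟨D2, hD2f, hD21, hnvonly⟩ := pair_other h2 (Finset.mem_filter.2 ⟨hD1F, hnvD1⟩)
  have hD2F : D2 ∈ F := (Finset.mem_filter.1 hD2f).1
  have hnvD2 : -v ∈ D2 := (Finset.mem_filter.1 hD2f).2
  have hnv_only : ∀ W ∈ F, -v ∈ W → W = D1 ∨ W = D2 :=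
    fun W hW h => hnvonly W (Finset.mem_filter.2 ⟨hW, h⟩)
  have hIC2 : IsClause C2 := hU.1 C2 hC2F
  have hID2 : IsClause D2 := hU.1 D2 hD2F
  have hnvC2 : -v ∉ C2 := neg_not_mem hIC2 hvC2
  have hvD2 : v ∉ D2 := by have := neg_not_mem hID2 hnvD2; simpa using this
  have hC1C2 : C1 ≠ C2 := Ne.symm hC21
  have hD1D2 : D1 ≠ D2 := Ne.symm hD21
  have hC2D1 : C2 ≠ D1 := fun h => hvD1 (h ▸ hvC2)
  have hD2C1 : D2 ≠ C1 := fun h => hnvC1 (h ▸ hnvD2)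
  -- clash literal of C1 and C2 lies in E
  have hclash12 : ∃ x ∈ E, -x ∈ C2 := by
    obtain ⟨x, hx1, hx2⟩ := hU.2.1 C1 hC1F C2 hC2F hC1C2
    rcases (mem_C1 x).1 hx1 with rfl | hx
    · exact absurd hx2 hnvC2
    · exact ⟨x, hx, hx2⟩
  have hclash21 : ∃ x ∈ C2, -x ∈ E := by
    obtain ⟨x, hx2, hx1⟩ := hU.2.1 C2 hC2F C1 hC1F (Ne.symm hC1C2)
    rcases (mem_C1 (-x)).1 hx1 with h | hx
    · exfalso
      have : x = -v := by omega
      exact hnvC2 (this ▸ hx2)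
    · exact ⟨x, hx2, hx⟩
  -- flipped clauses are not in F
  have hCpnF : Cp ∉ F := by
    intro h
    have hne : Cp ≠ C1 := fun hh => hnyC1 (hh ▸ hnyCp)
    obtain ⟨x, hxCp, hxC1⟩ := hU.2.1 Cp h C1 hC1F hne
    rcases (mem_Cp x).1 hxCp with rfl | rfl | hx
    · rw [neg_neg] at hxC1
      exact hyC1 hxC1
    · exact hnvC1 hxC1
    · rcases (mem_C1 (-x)).1 hxC1 with hh | hh
      · exact hnvE (by rw [show (-v : ℤ) = x by omega]; exact hx)
      · exact neg_not_mem hE hx hh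
  have hDpnF : Dp ∉ F := by
    intro h
    have hne : Dp ≠ C1 := fun hh => hyC1 (hh ▸ hyDp)
    obtain ⟨x, hxDp, hxC1⟩ := hU.2.1 Dp h C1 hC1F hne
    rcases (mem_Dp x).1 hxDp with rfl | hx
    · exact hnyC1 hxC1
    · rcases (mem_C1 (-x)).1 hxC1 with hh | hh
      · exact hnvE (by rw [show (-v : ℤ) = x by omega]; exact hx)
      · exact neg_not_mem hE hx hh
  have hCpDp : Cp ≠ Dp := by
    intro h
    have hvDp : v ∈ Dp := h ▸ hvCp
    rcases (mem_Dp v).1 hvDp with hh | hh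
    · exact hyv hh.symm
    · exact hvE hh
  -- the flipped clause-set
  set F' : Cls := (F \ {C1, D1}) ∪ {Cp, Dp} with hF'def
  have mem_F' : ∀ W, W ∈ F' ↔ ((W ∈ F ∧ W ≠ C1 ∧ W ≠ D1) ∨ W = Cp ∨ W = Dp) := by
    intro W
    rw [hF'def]
    simp only [Finset.mem_union, Finset.mem_sdiff, Finset.mem_insert, Finset.mem_singleton]
    tauto
  have hCpF' : Cp ∈ F' := (mem_F' Cp).2 (Or.inr (Or.inl rfl))
  have hDpF' : Dp ∈ F' := (mem_F' Dp).2 (Or.inr (Or.inr rfl))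
  have hC2F' : C2 ∈ F' := (mem_F' C2).2 (Or.inl ⟨hC2F, Ne.symm hC1C2, hC2D1⟩)
  have hD2F' : D2 ∈ F' := (mem_F' D2).2 (Or.inl ⟨hD2F, hD2C1, Ne.symm hD1D2⟩)
  -- UHit F'
  have hUf : UHit F' := by
    refine ⟨?_, ?_, ?_⟩
    · intro W hW
      rcases (mem_F' W).1 hW with ⟨hWF, _, _⟩ | rfl | rfl
      · exact hU.1 W hWF
      · exact hICp
      · exact hIDp
    · -- Hitting F'
      have hCpW : ∀ W ∈ F, W ≠ C1 → ∃ x ∈ Cp, -x ∈ W := by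
        intro W hW hne
        obtain ⟨x, hx1, hxW⟩ := hU.2.1 C1 hC1F W hW (Ne.symm hne)
        refine ⟨x, ?_, hxW⟩
        rcases (mem_C1 x).1 hx1 with rfl | hx
        · exact hvCp
        · exact (mem_Cp x).2 (Or.inr (Or.inr hx))
      have hWCp : ∀ W ∈ F, W ≠ C1 → ∃ x ∈ W, -x ∈ Cp := by
        intro W hW hne
        obtain ⟨x, hxW, hxC1⟩ := hU.2.1 W hW C1 hC1F hne
        refine ⟨x, hxW, ?_⟩
        rcases (mem_C1 (-x)).1 hxC1 with h | h
        · exact (mem_Cp (-x)).2 (Or.inr (Or.inl h))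
        · exact (mem_Cp (-x)).2 (Or.inr (Or.inr h))
      have hDpW : ∀ W ∈ F, W ≠ C1 → W ≠ D1 → ∃ x ∈ Dp, -x ∈ W := by
        intro W hW hne1 hne2
        obtain ⟨x, hxD1, hxW⟩ := hU.2.1 D1 hD1F W hW (Ne.symm hne2)
        rcases (mem_D1 x).1 hxD1 with h | h | hx
        · rw [h, neg_neg] at hxW
          rcases hv_only W hW hxW with rfl | rfl
          · exact absurd rfl hne1
          · obtain ⟨x', hx'E, hx'C2⟩ := hclash12
            exact ⟨x', (mem_Dp x').2 (Or.inr hx'E), hx'C2⟩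
        · exact ⟨x, (mem_Dp x).2 (Or.inl h), hxW⟩
        · exact ⟨x, (mem_Dp x).2 (Or.inr hx), hxW⟩
      have hWDp : ∀ W ∈ F, W ≠ C1 → W ≠ D1 → ∃ x ∈ W, -x ∈ Dp := by
        intro W hW hne1 hne2
        obtain ⟨x, hxW, hxD1⟩ := hU.2.1 W hW D1 hD1F hne2
        rcases (mem_D1 (-x)).1 hxD1 with h | h | h
        · have hxv : x = v := by omega
          subst hxv
          rcases hv_only W hW hxW with rfl | rfl
          · exact absurd rfl hne1
          · obtain ⟨x', hx'C2, hx'E⟩ := hclash21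
            exact ⟨x', hx'C2, (mem_Dp (-x')).2 (Or.inr hx'E)⟩
        · exact ⟨x, hxW, (mem_Dp (-x)).2 (Or.inl h)⟩
        · exact ⟨x, hxW, (mem_Dp (-x)).2 (Or.inr h)⟩
      intro X hX Y hY hne
      rcases (mem_F' X).1 hX with ⟨hXF, hX1, hX2⟩ | rfl | rfl <;>
        rcases (mem_F' Y).1 hY with ⟨hYF, hY1, hY2⟩ | rfl | rfl
      · exact hU.2.1 X hXF Y hYF hne
      · exact hWCp X hXF hX1
      · exact hWDp X hXF hX1 hX2
      · exact hCpW Y hYF hY1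
      · exact absurd rfl hne
      · exact ⟨-y, hnyCp, by rw [neg_neg]; exact hyDp⟩
      · exact hDpW Y hYF hY1 hY2
      · exact ⟨y, hyDp, hnyCp⟩
      · exact absurd rfl hne
    · -- unsat
      intro ⟨S, hS, hall⟩
      apply hU.2.2
      refine ⟨S, hS, fun D hD => ?_⟩
      by_cases hD1' : D = D1
      · subst hD1'
        obtain ⟨s, hs⟩ := hall Dp hDpF'
        rw [Finset.mem_inter] at hs
        refine ⟨s, Finset.mem_inter.2 ⟨hs.1, ?_⟩⟩
        rcases (mem_Dp s).1 hs.2 with rfl | h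
        · exact hyD1
        · exact (mem_D1 s).2 (Or.inr (Or.inr h))
      by_cases hC1' : D = C1
      · subst hC1'
        obtain ⟨s, hs⟩ := hall Cp hCpF'
        rw [Finset.mem_inter] at hs
        rcases (mem_Cp s).1 hs.2 with h | h | h
        · -- s = -y : use Dp element instead
          obtain ⟨s', hs'⟩ := hall Dp hDpF'
          rw [Finset.mem_inter] at hs'
          rcases (mem_Dp s').1 hs'.2 with h' | h'
          · exfalso
            have h1 : -y ∈ S := by rw [← h]; exact hs.1
            have h2 : y ∈ S := by rw [← h']; exact hs'.1
            exact hS.2 y h2 h1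
          · exact ⟨s', Finset.mem_inter.2 ⟨hs'.1, (mem_C1 s').2 (Or.inr h')⟩⟩
        · exact ⟨s, Finset.mem_inter.2 ⟨hs.1, (mem_C1 s).2 (Or.inl h)⟩⟩
        · exact ⟨s, Finset.mem_inter.2 ⟨hs.1, (mem_C1 s).2 (Or.inr h)⟩⟩
      · exact hall D ((mem_F' D).2 (Or.inl ⟨hD, hC1', hD1'⟩))
  -- NfsFlip witness
  have habs : |v| ≠ |y| := by
    intro h
    rcases abs_eq_abs.1 h with h | h
    · exact hyv h.symm
    · exact hynv (by omega)
  have hflip : NfsFlip F F' := by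
    refine ⟨E, v, y, hE, hv0, hy0, habs, hvE, hnvE, hyE, hnyE, ?_, ?_, ?_, ?_, ?_⟩
    · rwa [← hC1def]
    · rw [Finset.insert_comm]
      rwa [← hD1def]
    · rwa [← hCpdef]
    · rwa [← hDpdef]
    · rw [hF'def, hC1def, hD1def, hCpdef, hDpdef, Finset.insert_comm y (-v) E]
  -- B1 : the second negative clause avoids -E and y
  have hInE : IsClause (negC E) := isClause_negC hE
  have hS0 : IsClause (insert v (insert y (negC E))) := by
    refine isClause_insert hv0 ?_ (isClause_insert hy0 ?_ hInE)
    · intro h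
      rcases Finset.mem_insert.1 h with h | h
      · exact hynv (by omega)
      · rw [mem_negC, neg_neg] at h
        exact hvE h
    · rw [mem_negC, neg_neg]
      exact hyE
  have hcovC1 : ∀ a ∈ C1, a ≠ v → -a ∈ insert v (insert y (negC E)) := by
    intro a ha hav
    rcases (mem_C1 a).1 ha with h | h
    · exact absurd h hav
    · exact Finset.mem_insert_of_mem (Finset.mem_insert_of_mem (mem_negC.2 (by rwa [neg_neg])))
  have hmB1 : ∀ a ∈ insert v (insert y (negC E)), a ∉ D2 := by
    rcases keyRow hU v C1 D1 D2 hC1F hvC1 hnv_only _ hS0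
      (Finset.mem_insert_self _ _) hcovC1 with h | h
    · exact absurd hyD1 (h y (Finset.mem_insert_of_mem (Finset.mem_insert_self _ _)))
    · exact h
  have hED2 : ∀ e ∈ E, -e ∉ D2 := fun e he =>
    hmB1 (-e) (Finset.mem_insert_of_mem (Finset.mem_insert_of_mem (mem_negC.2 (by rwa [neg_neg]))))
  have hyD2 : y ∉ D2 := hmB1 y (Finset.mem_insert_of_mem (Finset.mem_insert_self _ _))
  have hnyD2 : -y ∈ D2 := by
    obtain ⟨x, hxD2, hxD1⟩ := hU.2.1 D2 hD2F D1 hD1F (Ne.symm hD1D2)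
    rcases (mem_D1 (-x)).1 hxD1 with h | h | h
    · exfalso
      have hxv : x = v := by omega
      rw [hxv] at hxD2
      exact hvD2 hxD2
    · rw [show x = -y by omega] at hxD2
      exact hxD2
    · exfalso
      have := hED2 (-x) h
      rw [neg_neg] at this
      exact this hxD2
  -- B2 : shape of D2
  have hD2shape : ∀ t ∈ D2, t = -v ∨ t = -y ∨ t ∈ E := by
    intro t ht
    by_cases e1 : t = -v
    · exact Or.inl e1
    by_cases e2 : t = -y
    · exact Or.inr (Or.inl e2)
    by_cases e3 : t ∈ E
    · exact Or.inr (Or.inr e3)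
    exfalso
    have hSt : IsClause (insert t (insert v (insert y (negC E)))) := by
      refine isClause_insert (mem_ne_zero hID2 ht) ?_ hS0
      intro h
      rcases Finset.mem_insert.1 h with h | h
      · exact e1 (by omega)
      rcases Finset.mem_insert.1 h with h | h
      · exact e2 (by omega)
      · rw [mem_negC, neg_neg] at h
        exact e3 h
    rcases keyRow hU v C1 D1 D2 hC1F hvC1 hnv_only _ hSt
      (Finset.mem_insert_of_mem (Finset.mem_insert_self _ _))
      (fun a ha hav => Finset.mem_insert_of_mem (hcovC1 a ha hav)) with h | h
    · exact h y (Finset.mem_insert_of_mem (Finset.mem_insert_of_mem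
        (Finset.mem_insert_self _ _))) hyD1
    · exact h t (Finset.mem_insert_self _ _) ht
  -- B3 : some element of E is missing from D2
  have hzEx : ∃ z ∈ E, z ∉ D2 := by
    by_contra hcon
    push_neg at hcon
    have hD2eq : D2 = insert (-v) (insert (-y) E) := by
      apply Finset.ext
      intro t
      simp only [Finset.mem_insert]
      constructor
      · intro ht
        exact hD2shape t ht
      · rintro (rfl | rfl | ht)
        · exact hnvD2
        · exact hnyD2
        · exact hcon t ht
    have hbase : IsClause (insert (-v) E) := isClause_insert hnv0 (by rw [neg_neg]; exact hvE) hE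
    refine hnofs (insert (-v) E) y hbase hy0 ?_ ?_ ?_ ?_
    · intro h
      rcases Finset.mem_insert.1 h with h | h
      · exact hynv h
      · exact hyE h
    · intro h
      rcases Finset.mem_insert.1 h with h | h
      · exact hyv (by omega)
      · exact hnyE h
    · rw [Finset.insert_comm, ← hD1def]
      exact hD1F
    · rw [Finset.insert_comm, ← hD2eq]
      exact hD2F
  obtain ⟨z, hzE, hzD2⟩ := hzEx
  -- characterizations in F'
  have hv_only' : ∀ W ∈ F', v ∈ W → W = C2 ∨ W = Cp := by
    intro W hW h
    rcases (mem_F' W).1 hW with ⟨hWF, hne1, hne2⟩ | rfl | rfl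
    · rcases hv_only W hWF h with rfl | rfl
      · exact absurd rfl hne1
      · exact Or.inl rfl
    · exact Or.inr rfl
    · exfalso
      rcases (mem_Dp v).1 h with h | h
      · exact hyv h.symm
      · exact hvE h
  have hnv_only' : ∀ W ∈ F', -v ∈ W → W = D2 ∨ W = D2 := by
    intro W hW h
    rcases (mem_F' W).1 hW with ⟨hWF, hne1, hne2⟩ | rfl | rfl
    · rcases hnv_only W hWF h with rfl | rfl
      · exact absurd rfl hne2
      · exact Or.inl rfl
    · exfalso
      rcases (mem_Cp (-v)).1 h with h | h | h
      · exact hyv (by omega)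
      · omega
      · exact hnvE h
    · exfalso
      rcases (mem_Dp (-v)).1 h with h | h
      · exact hynv h.symm
      · exact hnvE h
  -- B5 : D2 (minus -v) is contained in C2
  have hSb5 : IsClause (insert v (negC (C2.erase v))) := by
    refine isClause_insert hv0 ?_
      (isClause_negC (isClause_subset (Finset.erase_subset _ _) hIC2))
    rw [mem_negC, neg_neg]
    intro h
    exact (Finset.mem_erase.1 h).1 rfl
  have hcovC2 : ∀ a ∈ C2, a ≠ v → -a ∈ insert v (negC (C2.erase v)) :=
    fun a ha hav => Finset.mem_insert_of_mem (mem_negC.2 (by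
      rw [neg_neg]; exact Finset.mem_erase.2 ⟨hav, ha⟩))
  have hP2A2 : ∀ t ∈ D2, t ≠ -v → t ∈ C2 := by
    intro t ht htv
    by_cases htC2 : t ∈ C2
    · exact htC2
    exfalso
    have hSt : IsClause (insert t (insert v (negC (C2.erase v)))) := by
      refine isClause_insert (mem_ne_zero hID2 ht) ?_ hSb5
      intro h
      rcases Finset.mem_insert.1 h with h | h
      · exact htv (by omega)
      · rw [mem_negC, neg_neg] at h
        exact htC2 (Finset.mem_of_mem_erase h)
    have hkey := keyRow hUf v C2 D2 D2 hC2F' hvC2 hnv_only' _ hSt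
      (Finset.mem_insert_of_mem (Finset.mem_insert_self _ _))
      (fun a ha hav => Finset.mem_insert_of_mem (hcovC2 a ha hav))
    have hm : ∀ a ∈ insert t (insert v (negC (C2.erase v))), a ∉ D2 := by
      rcases hkey with h | h <;> exact h
    exact hm t (Finset.mem_insert_self _ _) ht
  by_cases hA2sub : ∀ t ∈ C2, t ≠ v → t ∈ D2
  · -- fs pair {C2, D2} inside F'
    have hD2eq : D2 = insert (-v) (C2.erase v) := by
      apply Finset.ext
      intro t
      rw [Finset.mem_insert, Finset.mem_erase]
      constructor
      · intro ht
        by_cases h1 : t = -v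
        · exact Or.inl h1
        · exact Or.inr ⟨fun hh => hvD2 (hh ▸ ht), hP2A2 t ht h1⟩
      · rintro (rfl | ⟨h1, h2⟩)
        · exact hnvD2
        · exact hA2sub t h2 h1
    refine ⟨F', hflip, {C2, D2}, ?_, ?_⟩
    · intro W hW
      rcases Finset.mem_insert.1 hW with rfl | hW
      · exact hC2F'
      · rw [Finset.mem_singleton] at hW
        subst hW
        exact hD2F'
    · exact ⟨C2.erase v, v, isClause_subset (Finset.erase_subset _ _) hIC2, hv0,
        Finset.notMem_erase _ _, fun h => hnvC2 (Finset.mem_of_mem_erase h),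
        by rw [Finset.insert_erase hvC2, ← hD2eq]⟩
  · push_neg at hA2sub
    obtain ⟨s, hsC2, hsv, hsD2⟩ := hA2sub
    have hv_only'' : ∀ W ∈ F, -(-v) ∈ W → W = C1 ∨ W = C2 := by
      intro W hW h
      exact hv_only W hW (by simpa using h)
    have hbase2 : IsClause (insert (-v) (negC (D2.erase (-v)))) := by
      refine isClause_insert hnv0 ?_
        (isClause_negC (isClause_subset (Finset.erase_subset _ _) hID2))
      rw [neg_neg, mem_negC]
      exact Finset.notMem_erase _ _
    have claim1 : ∀ t, t ∈ C2 → t ≠ v → t ∉ D2 → ∀ z', z' ∈ E → z' ∉ D2 → t = -z' := by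
      intro t htC2 htv htD2 z' hz'E hz'D2
      by_contra htnz
      have hSz : IsClause (insert z' (insert (-v) (negC (D2.erase (-v))))) := by
        refine isClause_insert (mem_ne_zero hE hz'E) ?_ hbase2
        intro h
        rcases Finset.mem_insert.1 h with h | h
        · exact hvE (by rw [show v = z' by omega]; exact hz'E)
        · rw [mem_negC, neg_neg] at h
          exact hz'D2 (Finset.mem_of_mem_erase h)
      have hSt : IsClause (insert t (insert z' (insert (-v) (negC (D2.erase (-v)))))) := by
        refine isClause_insert (mem_ne_zero hIC2 htC2) ?_ hSz
        intro h
        rcases Finset.mem_insert.1 h with h | h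
        · exact htnz (by omega)
        rcases Finset.mem_insert.1 h with h | h
        · exact htv (by omega)
        · rw [mem_negC, neg_neg] at h
          exact htD2 (Finset.mem_of_mem_erase h)
      have hkey := keyRow hU (-v) D2 C1 C2 hD2F hnvD2 hv_only'' _ hSt
        (Finset.mem_insert_of_mem (Finset.mem_insert_of_mem (Finset.mem_insert_self _ _)))
        (fun b hb hbv => Finset.mem_insert_of_mem (Finset.mem_insert_of_mem
          (Finset.mem_insert_of_mem (mem_negC.2 (by
            rw [neg_neg]; exact Finset.mem_erase.2 ⟨hbv, hb⟩)))))
      rcases hkey with h | h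
      · exact h z' (Finset.mem_insert_of_mem (Finset.mem_insert_self _ _))
          ((mem_C1 z').2 (Or.inr hz'E))
      · exact h t (Finset.mem_insert_self _ _) htC2
    have hsz : s = -z := claim1 s hsC2 hsv hsD2 z hzE hzD2
    have hEuniq : ∀ z', z' ∈ E → z' ∉ D2 → z' = z := by
      intro z' hz1 hz2
      have e1 := claim1 s hsC2 hsv hsD2 z' hz1 hz2
      omega
    have hP2shape : D2.erase (-v) = insert (-y) (E.erase z) := by
      apply Finset.ext
      intro t
      rw [Finset.mem_erase, Finset.mem_insert, Finset.mem_erase]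
      constructor
      · rintro ⟨h1, h2⟩
        rcases hD2shape t h2 with h | h | h
        · exact absurd h h1
        · exact Or.inl h
        · exact Or.inr ⟨fun hh => hzD2 (hh ▸ h2), h⟩
      · rintro (rfl | ⟨h1, h2⟩)
        · exact ⟨by omega, hnyD2⟩
        · refine ⟨fun hh => hnvE (hh ▸ h2), ?_⟩
          by_contra h3
          exact h1 (hEuniq t h2 h3)
    have hA2shape : C2.erase v = insert (-z) (D2.erase (-v)) := by
      apply Finset.ext
      intro t
      rw [Finset.mem_erase, Finset.mem_insert, Finset.mem_erase]
      constructor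
      · rintro ⟨h1, h2⟩
        by_cases h3 : t ∈ D2
        · exact Or.inr ⟨fun hh => hnvC2 (hh ▸ h2), h3⟩
        · exact Or.inl (claim1 t h2 h1 h3 z hzE hzD2)
      · rintro (rfl | ⟨h1, h2⟩)
        · refine ⟨?_, by rw [← hsz]; exact hsC2⟩
          intro hh
          exact hnvE (by rw [show (-v : ℤ) = z by omega]; exact hzE)
        · exact ⟨fun hh => hvD2 (hh ▸ h2), hP2A2 t h2 h1⟩
    obtain ⟨G, hGdef⟩ : ∃ X, X = insert (-y) (insert v (E.erase z)) := ⟨_, rfl⟩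
    have hCpG : insert z G = Cp := by
      rw [hGdef, hCpdef]
      apply Finset.ext
      intro t
      simp only [Finset.mem_insert, Finset.mem_erase]
      constructor
      · rintro (rfl | h | h | ⟨h1, h2⟩)
        · exact Or.inr (Or.inr hzE)
        · exact Or.inl h
        · exact Or.inr (Or.inl h)
        · exact Or.inr (Or.inr h2)
      · rintro (h | h | h)
        · exact Or.inr (Or.inl h)
        · exact Or.inr (Or.inr (Or.inl h))
        · by_cases hz' : t = z
          · exact Or.inl hz'
          · exact Or.inr (Or.inr (Or.inr ⟨hz', h⟩))
    have hC2G : insert (-z) G = C2 := by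
      rw [hGdef]
      have e1 : C2 = insert v (C2.erase v) := (Finset.insert_erase hvC2).symm
      rw [e1, hA2shape, hP2shape]
      apply Finset.ext
      intro t
      simp only [Finset.mem_insert, Finset.mem_erase]
      constructor
      · rintro (h | h | h | h)
        · exact Or.inr (Or.inl h)
        · exact Or.inr (Or.inr (Or.inl h))
        · exact Or.inl h
        · exact Or.inr (Or.inr (Or.inr h))
      · rintro (h | h | h | h)
        · exact Or.inr (Or.inr (Or.inl h))
        · exact Or.inl h
        · exact Or.inr (Or.inl h)
        · exact Or.inr (Or.inr (Or.inr h))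
    have hGclause : IsClause G := by
      rw [hGdef]
      refine isClause_insert hny0 ?_ (isClause_insert hv0 ?_
        (isClause_subset (Finset.erase_subset _ _) hE))
      · rw [neg_neg]
        intro h
        rcases Finset.mem_insert.1 h with h | h
        · exact hyv h
        · exact hyE (Finset.mem_of_mem_erase h)
      · intro h
        exact hnvE (Finset.mem_of_mem_erase h)
    have hzG : z ∉ G := by
      rw [hGdef]
      intro h
      rcases Finset.mem_insert.1 h with h | h
      · exact hnyE (h ▸ hzE)
      rcases Finset.mem_insert.1 h with h | h
      · exact hvE (h ▸ hzE)
      · exact (Finset.mem_erase.1 h).1 rfl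
    have hnzG : -z ∉ G := by
      rw [hGdef]
      intro h
      rcases Finset.mem_insert.1 h with h | h
      · exact hyE (by rw [show y = z by omega]; exact hzE)
      rcases Finset.mem_insert.1 h with h | h
      · exact hnvE (by rw [show (-v : ℤ) = z by omega]; exact hzE)
      · exact neg_not_mem hE hzE (Finset.mem_of_mem_erase h)
    refine ⟨F', hflip, {Cp, C2}, ?_, ?_⟩
    · intro W hW
      rcases Finset.mem_insert.1 hW with rfl | hW
      · exact hCpF'
      · rw [Finset.mem_singleton] at hW
        subst hW
        exact hC2F'
    · exact ⟨G, z, hGclause, mem_ne_zero hE hzE, hzG, hnzG, by rw [hCpG, hC2G]⟩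

end PartB
/-- A UHIT with a variable occurring exactly twice positively and twice negatively
contains an fs-pair, or admits an nfs-flip producing an fs-pair. -/
theorem stmt5 (F : Cls) (hU : UHit F) (v : ℤ) (hv : v ∈ cvar F)
    (h1 : ldeg F v = 2) (h2 : ldeg F (-v) = 2) :
    (∃ P ⊆ F, IsFsPair P) ∨ ∃ F', NfsFlip F F' ∧ ∃ P ⊆ F', IsFsPair P := by
  by_cases hfs : ∃ P ⊆ F, IsFsPair P
  · exact Or.inl hfs
  · right
    have hv0 : v ≠ 0 := by
      rw [cvar, Finset.mem_sup] at hv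
      obtain ⟨C, hC, hvC⟩ := hv
      rw [Finset.mem_image] at hvC
      obtain ⟨x, hx, hxv⟩ := hvC
      intro h0
      rw [h0] at hxv
      exact mem_ne_zero (hU.1 C hC) hx (abs_eq_zero.1 hxv)
    have hnofs : ∀ G x, IsClause G → x ≠ 0 → x ∉ G → -x ∉ G →
        insert x G ∈ F → insert (-x) G ∈ F → False := by
      intro G x hG hx0 hxG hnxG hm1 hm2
      apply hfs
      refine ⟨{insert x G, insert (-x) G}, ?_, G, x, hG, hx0, hxG, hnxG, rfl⟩
      intro W hW
      rcases Finset.mem_insert.1 hW with rfl | hW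
      · exact hm1
      · rw [Finset.mem_singleton] at hW
        subst hW
        exact hm2
    obtain ⟨E, y, p1, p2, p3, p4, p5, p6, p7, p8, p9, p10⟩ :=
      partA F hU v hv0 h1 h2 hnofs
    exact partB F hU v y E p1 hv0 p2 p3 p4 p5 p6 p7 p8 p9 p10 h1 h2 hnofs
end

section
/- Let F be an unsatisfiable hitting clause-set and let F = F₀, F₁, …, F_m be a singular DP-sequence such that F_m is nonsingular. Then 2 · nsv(F) ≥ m, where nsv(F) is the number of singular variables of F. -/
namespace SDP
open Finset

lemma clause_subset {C D : Finset ℤ} (h : IsClause D) (hCD : C ⊆ D) : IsClause C :=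
  ⟨fun h0 => h.1 (hCD h0), fun x hx hnx => h.2 x (hCD hx) (hCD hnx)⟩

lemma clause_erase {C : Finset ℤ} (h : IsClause C) (a : ℤ) : IsClause (C.erase a) :=
  clause_subset h (erase_subset _ _)

lemma mem_clause_ne_zero {C : Finset ℤ} (h : IsClause C) {x : ℤ} (hx : x ∈ C) : x ≠ 0 := by
  rintro rfl; exact h.1 hx

lemma ldeg_pos {G : Cls} {x : ℤ} {C : Finset ℤ} (hC : C ∈ G) (hx : x ∈ C) : 0 < ldeg G x :=
  Finset.card_pos.2 ⟨C, Finset.mem_filter.2 ⟨hC, hx⟩⟩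

lemma exists_of_ldeg_pos {G : Cls} {x : ℤ} (h : 0 < ldeg G x) : ∃ C ∈ G, x ∈ C := by
  obtain ⟨C, hC⟩ := Finset.card_pos.1 h
  exact ⟨C, (Finset.mem_filter.1 hC).1, (Finset.mem_filter.1 hC).2⟩

lemma ldeg_unique {G : Cls} {x : ℤ} (h1 : ldeg G x = 1) {A B : Finset ℤ}
    (hA : A ∈ G) (hxA : x ∈ A) (hB : B ∈ G) (hxB : x ∈ B) : A = B := by
  have := Finset.card_le_one.1 (le_of_eq h1)
  exact this A (Finset.mem_filter.2 ⟨hA, hxA⟩) B (Finset.mem_filter.2 ⟨hB, hxB⟩)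

lemma mem_cvar_of {G : Cls} {C : Finset ℤ} {x : ℤ} (hC : C ∈ G) (hx : x ∈ C) :
    |x| ∈ cvar G := by
  rw [cvar, Finset.mem_sup]
  exact ⟨C, hC, Finset.mem_image.2 ⟨x, hx, rfl⟩⟩

lemma mem_cvar_iff {G : Cls} {w : ℤ} :
    w ∈ cvar G ↔ ∃ C ∈ G, ∃ x ∈ C, |x| = w := by
  rw [cvar, Finset.mem_sup]
  simp [Finset.mem_image]

lemma cvar_nonneg {G : Cls} {w : ℤ} (h : w ∈ cvar G) : 0 ≤ w := by
  obtain ⟨C, _, x, _, rfl⟩ := mem_cvar_iff.1 h; exact abs_nonneg x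

lemma cvar_pos {G : Cls} (hG : IsClauseSet G) {w : ℤ} (h : w ∈ cvar G) : 0 < w := by
  obtain ⟨C, hC, x, hx, rfl⟩ := mem_cvar_iff.1 h
  exact abs_pos.2 (mem_clause_ne_zero (hG C hC) hx)

lemma mem_cvar_lit {G : Cls} {w : ℤ} (hw : 0 ≤ w) :
    w ∈ cvar G ↔ (∃ C ∈ G, w ∈ C) ∨ (∃ C ∈ G, -w ∈ C) := by
  rw [mem_cvar_iff]
  constructor
  · rintro ⟨C, hC, x, hx, hxw⟩
    rcases abs_cases x with ⟨h1, _⟩ | ⟨h1, _⟩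
    · left; exact ⟨C, hC, by rw [← hxw, h1]; exact hx⟩
    · right; exact ⟨C, hC, by rw [← hxw, h1]; simpa using hx⟩
  · rintro (⟨C, hC, hw'⟩ | ⟨C, hC, hw'⟩)
    · exact ⟨C, hC, w, hw', abs_of_nonneg hw⟩
    · exact ⟨C, hC, -w, hw', by rw [abs_neg, abs_of_nonneg hw]⟩

/-- Full assignments relative to a variable set `V`. -/
def Full (V S : Finset ℤ) : Prop := ∀ w ∈ V, w ∈ S ∨ -w ∈ S

def Falsifies (S A : Finset ℤ) : Prop := ∀ a ∈ A, -a ∈ S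

lemma exists_full_ext {V T : Finset ℤ} (hV : ∀ w ∈ V, 0 < w) (hT : IsClause T) :
    ∃ S, IsClause S ∧ T ⊆ S ∧ Full V S := by
  refine ⟨T ∪ V.filter (fun w => w ∉ T ∧ -w ∉ T), ⟨?_, ?_⟩, Finset.subset_union_left, ?_⟩
  · intro h0
    rcases Finset.mem_union.1 h0 with h | h
    · exact hT.1 h
    · exact absurd (hV 0 (Finset.mem_filter.1 h).1) (by norm_num)
  · intro x hx hnx
    rcases Finset.mem_union.1 hx with h | h <;> rcases Finset.mem_union.1 hnx with h' | h'
    · exact hT.2 x h h'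
    · exact (Finset.mem_filter.1 h').2.2 (by simpa using h)
    · exact (Finset.mem_filter.1 h).2.2 h'
    · have := hV x (Finset.mem_filter.1 h).1
      have := hV (-x) (Finset.mem_filter.1 h').1
      omega
  · intro w hw
    by_cases h1 : w ∈ T
    · exact Or.inl (Finset.mem_union.2 (Or.inl h1))
    · by_cases h2 : -w ∈ T
      · exact Or.inr (Finset.mem_union.2 (Or.inl h2))
      · exact Or.inl (Finset.mem_union.2 (Or.inr (Finset.mem_filter.2 ⟨hw, h1, h2⟩)))

lemma exists_falsified {G : Cls} (hU : UHit G) {S : Finset ℤ} (hS : IsClause S)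
    (hfull : Full (cvar G) S) : ∃ A ∈ G, Falsifies S A := by
  by_contra hcon
  push_neg at hcon
  apply hU.2.2
  refine ⟨S, hS, fun D hD => ?_⟩
  by_contra hne
  apply hcon D hD
  intro a ha
  have hvar := mem_cvar_of hD ha
  have : a ∉ S := fun haS => hne ⟨a, Finset.mem_inter.2 ⟨haS, ha⟩⟩
  rcases abs_cases a with ⟨h1, _⟩ | ⟨h1, _⟩
  · rcases hfull _ hvar with h | h
    · rw [h1] at h; exact absurd h this
    · rwa [h1] at h
  · rcases hfull _ hvar with h | h
    · rw [h1] at h; simpa using h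
    · rw [h1] at h; simp at h; exact absurd h this

lemma falsified_unique {G : Cls} (hU : UHit G) {S A B : Finset ℤ} (hS : IsClause S)
    (hA : A ∈ G) (hB : B ∈ G) (hfA : Falsifies S A) (hfB : Falsifies S B) : A = B := by
  by_contra hne
  obtain ⟨z, hzA, hzB⟩ := hU.2.1 A hA B hB hne
  exact hS.2 _ (hfA _ hzA) (by simpa using hfB _ hzB)

def flp (x : ℤ) (S : Finset ℤ) : Finset ℤ := insert x (S.erase (-x))

lemma mem_flp {x S z} : z ∈ flp x S ↔ z = x ∨ (z ∈ S ∧ z ≠ -x) := by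
  simp [flp, Finset.mem_insert, Finset.mem_erase, and_comm]

lemma flp_clause {x : ℤ} {S : Finset ℤ} (hx : x ≠ 0) (hS : IsClause S) : IsClause (flp x S) := by
  constructor
  · intro h0
    rcases mem_flp.1 h0 with h | h
    · exact hx h.symm
    · exact hS.1 h.1
  · intro z hz hnz
    rcases mem_flp.1 hz with h | h <;> rcases mem_flp.1 hnz with h' | h'
    · omega
    · subst h; exact h'.2 rfl
    · subst h'; omega
    · exact hS.2 z h.1 h'.1

lemma flp_full {V S : Finset ℤ} {x : ℤ} (hf : Full V S) : Full V (flp x S) := by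
  intro w hw
  rcases hf w hw with h | h
  · by_cases hwx : w = -x
    · right; rw [hwx]; exact mem_flp.2 (Or.inl (by ring))
    · left; exact mem_flp.2 (Or.inr ⟨h, hwx⟩)
  · by_cases hwx : -w = -x
    · left; exact mem_flp.2 (Or.inl (by omega))
    · right; exact mem_flp.2 (Or.inr ⟨h, hwx⟩)

lemma hitting_of (hU : UHit G) : Hitting G := hU.2.1
lemma clauseset_of (hU : UHit G) : IsClauseSet G := hU.1

variable {G : Cls}

lemma cvar_pos' (hU : UHit G) {w : ℤ} (h : w ∈ cvar G) : 0 < w := cvar_pos hU.1 h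

/-- L1: structure lemma. -/
lemma structure1 (hU : UHit G) {u : ℤ} (hu : u ≠ 0) (h1 : ldeg G u = 1)
    {C D : Finset ℤ} (hC : C ∈ G) (huC : u ∈ C) (hD : D ∈ G) (huD : -u ∈ D) :
    C.erase u ⊆ D := by
  intro e heE
  by_contra heD
  have hCc : IsClause C := hU.1 C hC
  have hDc : IsClause D := hU.1 D hD
  have heC : e ∈ C := Finset.mem_of_mem_erase heE
  have heu : e ≠ u := Finset.ne_of_mem_erase heE
  have henu : e ≠ -u := by rintro rfl; exact hCc.2 u huC (by simpa using heC)
  have he0 : e ≠ 0 := mem_clause_ne_zero hCc heC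
  -- build the partial assignment T
  set T : Finset ℤ := insert u (insert e ((D.erase (-u)).image (fun z => -z))) with hT
  have memT : ∀ z, z ∈ T ↔ z = u ∨ z = e ∨ ∃ d ∈ D, d ≠ -u ∧ z = -d := by
    intro z
    simp only [hT, Finset.mem_insert, Finset.mem_image, Finset.mem_erase]
    constructor
    · rintro (h | h | ⟨d, ⟨hd1, hd2⟩, hd3⟩)
      · exact Or.inl h
      · exact Or.inr (Or.inl h)
      · exact Or.inr (Or.inr ⟨d, hd2, hd1, hd3.symm⟩)
    · rintro (h | h | ⟨d, hd1, hd2, hd3⟩)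
      · exact Or.inl h
      · exact Or.inr (Or.inl h)
      · exact Or.inr (Or.inr ⟨d, ⟨hd2, hd1⟩, hd3.symm⟩)
  have hTc : IsClause T := by
    constructor
    · intro h0
      rcases (memT 0).1 h0 with h | h | ⟨d, hd, _, hd3⟩
      · exact hu h.symm
      · exact he0 h.symm
      · exact mem_clause_ne_zero hDc hd (by omega)
    · intro z hz hnz
      rcases (memT z).1 hz with h | h | ⟨d, hd, hdu, hd3⟩ <;>
        rcases (memT (-z)).1 hnz with h' | h' | ⟨d', hd', hdu', hd3'⟩
      · omega
      · omega
      · exact hDc.2 d' hd' (by rw [show -d' = -u by omega]; exact huD)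
      · omega
      · omega
      · exact heD ((show d' = e by omega) ▸ hd')
      · exact hDc.2 d hd (by rw [show -d = -u by omega]; exact huD)
      · exact heD ((show d = e by omega) ▸ hd)
      · exact hDc.2 d hd ((show d' = -d by omega) ▸ hd')
  obtain ⟨S, hSc, hTS, hSfull⟩ := exists_full_ext (fun w hw => cvar_pos' hU hw) hTc
  have hfalsD : Falsifies S D := by
    intro d hd
    by_cases hdu : d = -u
    · subst hdu; have := hTS ((memT u).2 (Or.inl rfl)); simpa using this
    · exact hTS ((memT (-d)).2 (Or.inr (Or.inr ⟨d, hd, hdu, rfl⟩)))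
  -- flip to make -u true
  have hmuS : u ∈ S := hTS ((memT u).2 (Or.inl rfl))
  set S2 := flp (-u) S with hS2
  have hS2c : IsClause S2 := flp_clause (by omega) hSc
  have hS2full : Full (cvar G) S2 := flp_full hSfull
  obtain ⟨A2, hA2, hfA2⟩ := exists_falsified hU hS2c hS2full
  have hunA2 : -u ∉ A2 := by
    intro h
    have := hfA2 _ h
    rcases mem_flp.1 this with h' | h'
    · omega
    · exact h'.2 rfl
  have huA2 : u ∈ A2 := by
    by_contra huA2
    have : Falsifies S A2 := by
      intro a ha
      rcases mem_flp.1 (hfA2 a ha) with h' | h'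
      · exact absurd (by omega : a = u) (fun h => huA2 (h ▸ ha))
      · exact h'.1
    have := falsified_unique hU hSc hA2 hD this hfalsD
    rw [this] at hunA2; exact hunA2 huD
  have hA2C : A2 = C := ldeg_unique h1 hA2 huA2 hC huC
  have heS : e ∈ S := hTS ((memT e).2 (Or.inr (Or.inl rfl)))
  have := hfA2 e (hA2C ▸ heC)
  rcases mem_flp.1 this with h' | h'
  · omega
  · exact hSc.2 e heS h'.1

/-- When both degrees are 1, the two clauses form a full subsumption pair. -/
lemma fs_shape (hU : UHit G) {u : ℤ} (hu : u ≠ 0) (h1 : ldeg G u = 1)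
    (hk : ldeg G (-u) = 1) {Cu D : Finset ℤ} (hC : Cu ∈ G) (huC : u ∈ Cu)
    (hD : D ∈ G) (huD : -u ∈ D) : D = insert (-u) (Cu.erase u) := by
  have hCc : IsClause Cu := hU.1 Cu hC
  have hDc : IsClause D := hU.1 D hD
  have hsub : Cu.erase u ⊆ D := structure1 hU hu h1 hC huC hD huD
  apply Finset.Subset.antisymm _ (by
    intro z hz
    rcases Finset.mem_insert.1 hz with rfl | hz
    · exact huD
    · exact hsub hz)
  intro w hw
  rw [Finset.mem_insert]
  by_contra hcon
  push_neg at hcon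
  obtain ⟨hwnu, hwE⟩ := hcon
  have hwu : w ≠ u := by rintro rfl; exact hDc.2 w hw (by simpa using huD)
  have hwCu : w ∉ Cu := by
    intro h
    exact hwE (Finset.mem_erase.2 ⟨hwu, h⟩)
  have hnwCu : -w ∉ Cu := by
    intro h
    have : -w ∈ Cu.erase u := Finset.mem_erase.2 ⟨by omega, h⟩
    exact hDc.2 w hw (by simpa using hsub this)
  have hw0 : w ≠ 0 := mem_clause_ne_zero hDc hw
  set T : Finset ℤ := insert w (Cu.image (fun z => -z)) with hT
  have memT : ∀ z, z ∈ T ↔ z = w ∨ ∃ c ∈ Cu, z = -c := by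
    intro z
    simp only [hT, Finset.mem_insert, Finset.mem_image]
    constructor
    · rintro (h | ⟨c, hc1, hc2⟩)
      · exact Or.inl h
      · exact Or.inr ⟨c, hc1, hc2.symm⟩
    · rintro (h | ⟨c, hc1, hc2⟩)
      · exact Or.inl h
      · exact Or.inr ⟨c, hc1, hc2.symm⟩
  have hTc : IsClause T := by
    constructor
    · intro h0
      rcases (memT 0).1 h0 with h | ⟨c, hc, hc2⟩
      · exact hw0 h.symm
      · exact mem_clause_ne_zero hCc hc (by omega)
    · intro z hz hnz
      rcases (memT z).1 hz with h | ⟨c, hc, hc2⟩ <;>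
        rcases (memT (-z)).1 hnz with h' | ⟨c', hc', hc2'⟩
      · omega
      · exact hwCu ((show c' = w by omega) ▸ hc')
      · exact hwCu ((show c = w by omega) ▸ hc)
      · exact hCc.2 c hc ((show c' = -c by omega) ▸ hc')
  obtain ⟨S, hSc, hTS, hSfull⟩ := exists_full_ext (fun w hw => cvar_pos' hU hw) hTc
  have hfalsC : Falsifies S Cu := fun c hc => hTS ((memT (-c)).2 (Or.inr ⟨c, hc, rfl⟩))
  have hmuS : -u ∈ S := hfalsC u huC
  set S2 := flp u S with hS2
  have hS2c : IsClause S2 := flp_clause hu hSc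
  have hS2full : Full (cvar G) S2 := flp_full hSfull
  obtain ⟨A2, hA2, hfA2⟩ := exists_falsified hU hS2c hS2full
  have huA2 : u ∉ A2 := by
    intro h
    rcases mem_flp.1 (hfA2 _ h) with h' | h'
    · omega
    · exact h'.2 rfl
  have hnuA2 : -u ∈ A2 := by
    by_contra hnuA2
    have : Falsifies S A2 := by
      intro a ha
      rcases mem_flp.1 (hfA2 a ha) with h' | h'
      · exact absurd (show a = -u by omega) (fun h => hnuA2 (h ▸ ha))
      · exact h'.1
    have := falsified_unique hU hSc hA2 hC this hfalsC
    rw [this] at huA2; exact huA2 huC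
  have hA2D : A2 = D := ldeg_unique hk hA2 hnuA2 hD huD
  have hwS : w ∈ S := hTS ((memT w).2 (Or.inl rfl))
  rcases mem_flp.1 (hfA2 w (hA2D ▸ hw)) with h' | h'
  · omega
  · exact hSc.2 w hwS h'.1

/-- L2': a clause of a UHIT has at most one literal of degree 1. -/
lemma deg_one_unique (hU : UHit G) {E : Finset ℤ} (hE : E ∈ G) {x y : ℤ}
    (hx : x ∈ E) (hy : y ∈ E) (hdx : ldeg G x = 1) (hdy : ldeg G y = 1) : x = y := by
  by_contra hxy
  have hEc : IsClause E := hU.1 E hE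
  have hx0 : x ≠ 0 := mem_clause_ne_zero hEc hx
  have hy0 : y ≠ 0 := mem_clause_ne_zero hEc hy
  have hxny : x ≠ -y := by rintro rfl; exact hEc.2 y hy (by simpa using hx)
  set T : Finset ℤ := E.image (fun z => -z) with hT
  have memT : ∀ z, z ∈ T ↔ ∃ c ∈ E, z = -c := by
    intro z
    simp only [hT, Finset.mem_image]
    constructor
    · rintro ⟨c, hc1, hc2⟩; exact ⟨c, hc1, hc2.symm⟩
    · rintro ⟨c, hc1, hc2⟩; exact ⟨c, hc1, hc2.symm⟩
  have hTc : IsClause T := by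
    constructor
    · intro h0
      obtain ⟨c, hc, hc2⟩ := (memT 0).1 h0
      exact mem_clause_ne_zero hEc hc (by omega)
    · intro z hz hnz
      obtain ⟨c, hc, hc2⟩ := (memT z).1 hz
      obtain ⟨c', hc', hc2'⟩ := (memT (-z)).1 hnz
      exact hEc.2 c hc ((show c' = -c by omega) ▸ hc')
  obtain ⟨S0, hS0c, hTS0, hS0full⟩ := exists_full_ext (fun w hw => cvar_pos' hU hw) hTc
  have hfalsE : Falsifies S0 E := fun c hc => hTS0 ((memT (-c)).2 ⟨c, hc, rfl⟩)
  -- S1 = flip x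
  set S1 := flp x S0 with hS1
  have hS1c : IsClause S1 := flp_clause hx0 hS0c
  obtain ⟨A1, hA1, hfA1⟩ := exists_falsified hU hS1c (flp_full hS0full)
  have hxA1 : x ∉ A1 := by
    intro h
    rcases mem_flp.1 (hfA1 _ h) with h' | h'
    · omega
    · exact h'.2 rfl
  have hA1E : A1 ≠ E := fun h => hxA1 (h ▸ hx)
  have hnxA1 : -x ∈ A1 := by
    by_contra hnxA1
    have : Falsifies S0 A1 := by
      intro a ha
      rcases mem_flp.1 (hfA1 a ha) with h' | h'
      · exact absurd (show a = -x by omega) (fun h => hnxA1 (h ▸ ha))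
      · exact h'.1
    exact hA1E (falsified_unique hU hS0c hA1 hE this hfalsE)
  -- S2 = flip y
  set S2 := flp y S0 with hS2
  have hS2c : IsClause S2 := flp_clause hy0 hS0c
  obtain ⟨A2, hA2, hfA2⟩ := exists_falsified hU hS2c (flp_full hS0full)
  have hyA2 : y ∉ A2 := by
    intro h
    rcases mem_flp.1 (hfA2 _ h) with h' | h'
    · omega
    · exact h'.2 rfl
  have hA2E : A2 ≠ E := fun h => hyA2 (h ▸ hy)
  -- S3 = flip y S1
  set S3 := flp y S1 with hS3
  have hS3c : IsClause S3 := flp_clause hy0 hS1c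
  obtain ⟨A3, hA3, hfA3⟩ := exists_falsified hU hS3c (flp_full (flp_full hS0full))
  have memS1 : ∀ z, z ∈ S1 ↔ z = x ∨ (z ∈ S0 ∧ z ≠ -x) := fun z => mem_flp
  have memS2 : ∀ z, z ∈ S2 ↔ z = y ∨ (z ∈ S0 ∧ z ≠ -y) := fun z => mem_flp
  have memS3 : ∀ z, z ∈ S3 ↔ z = y ∨ z = x ∨ (z ∈ S0 ∧ z ≠ -x ∧ z ≠ -y) := by
    intro z
    rw [show (S3 : Finset ℤ) = flp y S1 from rfl, mem_flp, memS1]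
    constructor
    · rintro (h | ⟨h | h, hzy⟩)
      · exact Or.inl h
      · exact Or.inr (Or.inl h)
      · exact Or.inr (Or.inr ⟨h.1, h.2, hzy⟩)
    · rintro (h | h | ⟨h1, h2, h3⟩)
      · exact Or.inl h
      · exact Or.inr ⟨Or.inl h, by omega⟩
      · exact Or.inr ⟨Or.inr ⟨h1, h2⟩, h3⟩
  have hA31 : A3 = A1 := by
    by_contra hne
    obtain ⟨z, hzA3, hzA1⟩ := hU.2.1 A3 hA3 A1 hA1 hne
    have h3 := (memS3 (-z)).1 (hfA3 z hzA3)
    have h1 : z ∈ S1 := by have := hfA1 (-z) hzA1; simpa using this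
    rcases h3 with h | h | ⟨hS0', hnx, hny⟩
    · -- -z = y, so y ∈ A1 ≠ E : contradiction with ldeg y = 1
      have : y ∈ A1 := (show -z = y from h) ▸ hzA1
      exact hA1E (ldeg_unique hdy hA1 this hE hy)
    · -- -z = x: z = -x ∈ S1 impossible
      rcases (memS1 z).1 h1 with h' | h'
      · omega
      · exact h'.2 (by omega)
    · rcases (memS1 z).1 h1 with h' | h'
      · exact hnx (by omega)
      · exact hS0c.2 z h'.1 hS0'
  have hA32 : A3 = A2 := by
    by_contra hne
    obtain ⟨z, hzA3, hzA2⟩ := hU.2.1 A3 hA3 A2 hA2 hne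
    have h3 := (memS3 (-z)).1 (hfA3 z hzA3)
    have h2 : z ∈ S2 := by have := hfA2 (-z) hzA2; simpa using this
    rcases h3 with h | h | ⟨hS0', hnx, hny⟩
    · rcases (memS2 z).1 h2 with h' | h'
      · omega
      · exact h'.2 (by omega)
    · have : x ∈ A2 := (show -z = x from h) ▸ hzA2
      exact hA2E (ldeg_unique hdx hA2 this hE hx)
    · rcases (memS2 z).1 h2 with h' | h'
      · exact hny (by omega)
      · exact hS0c.2 z h'.1 hS0'
  -- now -y ∈ A2 = A1, falsified by S1 : y ∈ S1, contradiction
  have hnyA2 : -y ∈ A2 := by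
    by_contra hnyA2
    have : Falsifies S0 A2 := by
      intro a ha
      rcases mem_flp.1 (hfA2 a ha) with h' | h'
      · exact absurd (show a = -y by omega) (fun h => hnyA2 (h ▸ ha))
      · exact h'.1
    exact hA2E (falsified_unique hU hS0c hA2 hE this hfalsE)
  have hnyA1 : -y ∈ A1 := by rw [← hA31, hA32]; exact hnyA2
  have hyS1 : y ∈ S1 := by have := hfA1 (-y) hnyA1; simpa using this
  rcases (memS1 y).1 hyS1 with h | h
  · exact hxy h.symm
  · exact hS0c.2 y h.1 (by simpa using hfalsE y hy)

lemma inter_neg_eq {A B : Finset ℤ} {v : ℤ} :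
    A ∩ B.image (fun x => -x) = {v} ↔ (v ∈ A ∧ -v ∈ B ∧ ∀ z ∈ A, -z ∈ B → z = v) := by
  have hmem : ∀ z, z ∈ A ∩ B.image (fun x => -x) ↔ z ∈ A ∧ -z ∈ B := by
    intro z
    simp only [Finset.mem_inter, Finset.mem_image]
    constructor
    · rintro ⟨h1, c, hc, hc2⟩; exact ⟨h1, (show c = -z by omega) ▸ hc⟩
    · rintro ⟨h1, h2⟩; exact ⟨h1, -z, h2, by ring⟩
  rw [Finset.eq_singleton_iff_unique_mem]
  constructor
  · rintro ⟨h1, h2⟩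
    obtain ⟨ha, hb⟩ := (hmem v).1 h1
    exact ⟨ha, hb, fun z hz hz2 => h2 z ((hmem z).2 ⟨hz, hz2⟩)⟩
  · rintro ⟨h1, h2, h3⟩
    exact ⟨(hmem v).2 ⟨h1, h2⟩, fun z hz => by obtain ⟨a, b⟩ := (hmem z).1 hz; exact h3 z a b⟩

lemma res_eq {Cu A : Finset ℤ} {u : ℤ} (hCc : IsClause Cu) (hAc : IsClause A)
    (huC : u ∈ Cu) (huA : -u ∈ A) (hsub : Cu.erase u ⊆ A) :
    (Cu ∪ A) \ {u, -u} = A.erase (-u) := by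
  ext z
  simp only [Finset.mem_sdiff, Finset.mem_union, Finset.mem_insert, Finset.mem_singleton,
    Finset.mem_erase]
  constructor
  · rintro ⟨h1 | h1, h2⟩
    · exact ⟨fun h => (h2 (Or.inr h)), hsub (Finset.mem_erase.2 ⟨fun h => h2 (Or.inl h), h1⟩)⟩
    · exact ⟨fun h => h2 (Or.inr h), h1⟩
  · rintro ⟨h1, h2⟩
    refine ⟨Or.inr h2, ?_⟩
    rintro (h | h)
    · exact (show u ∉ A by simpa using hAc.2 (-u) huA) (h ▸ h2)
    · exact h1 h

/-- Computation of dp on a singular literal. -/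
lemma dp_eq (hU : UHit G) {u v : ℤ} (hu : u ≠ 0) (hv : v = u ∨ v = -u)
    (h1 : ldeg G u = 1) {Cu : Finset ℤ} (hC : Cu ∈ G) (huC : u ∈ Cu) :
    dp v G = (G.erase Cu).image (fun A => A.erase (-u)) := by
  have hCc : IsClause Cu := hU.1 Cu hC
  have hnuC : -u ∉ Cu := fun h => hCc.2 u huC (by simpa using h)
  ext R
  simp only [dp, Finset.mem_union, Finset.mem_image, Finset.mem_filter, Finset.mem_product,
    Finset.mem_erase]
  constructor
  · rintro (⟨p, hp, hres⟩ | ⟨hR, hv1, hv2⟩)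
    · obtain ⟨⟨hp1, hp2⟩, hcond⟩ :
          (p.1 ∈ G ∧ p.2 ∈ G) ∧ p.1 ∩ p.2.image (fun x => -x) = {v} := by simpa using hp
      obtain ⟨hvp1, hvp2, hmin⟩ := inter_neg_eq.1 hcond
      rcases hv with rfl | rfl
      · -- v = u : p.1 = Cu
        have hp1C : p.1 = Cu := ldeg_unique h1 hp1 hvp1 hC huC
        have hp2c : IsClause p.2 := hU.1 _ hp2
        have hsub : Cu.erase v ⊆ p.2 := structure1 hU hu h1 hC huC hp2 hvp2
        refine ⟨p.2, ⟨fun h => hp2c.2 (-v) hvp2 (by simp [h, huC]), hp2⟩, ?_⟩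
        rw [← hres, hp1C, res_eq hCc hp2c huC hvp2 hsub]
      · -- v = -u : p.2 = Cu
        have huv : -(-u) = u := by ring
        have hp2C : p.2 = Cu := ldeg_unique h1 hp2 (huv ▸ hvp2) hC huC
        have hp1c : IsClause p.1 := hU.1 _ hp1
        have hsub : Cu.erase u ⊆ p.1 := structure1 hU hu h1 hC huC hp1 hvp1
        refine ⟨p.1, ⟨fun h => hp1c.2 (-u) hvp1 (by rw [huv, h]; exact huC), hp1⟩, ?_⟩
        rw [← hres, hp2C, Finset.union_comm,
          show ({-u, -(-u)} : Finset ℤ) = {u, -u} by rw [huv]; exact Finset.pair_comm _ _,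
          res_eq hCc hp1c huC hvp1 hsub]
    · refine ⟨R, ⟨?_, hR⟩, ?_⟩
      · rintro rfl
        rcases hv with rfl | rfl
        · exact hv1 huC
        · exact hv2 (by simpa using huC)
      · have hnuR : -u ∉ R := by
          rcases hv with rfl | rfl
          · exact hv2
          · exact hv1
        exact Finset.erase_eq_of_notMem hnuR
  · rintro ⟨A, ⟨hACu, hA⟩, rfl⟩
    have hAc : IsClause A := hU.1 A hA
    by_cases hnuA : -u ∈ A
    · -- resolvent case
      left
      have hsub : Cu.erase u ⊆ A := structure1 hU hu h1 hC huC hA hnuA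
      rcases hv with rfl | rfl
      · refine ⟨(Cu, A), ?_, ?_⟩
        · simp only [Finset.mem_filter, Finset.mem_product]
          refine ⟨⟨hC, hA⟩, inter_neg_eq.2 ⟨huC, hnuA, fun z hz hz2 => ?_⟩⟩
          by_contra hzu
          exact hAc.2 z (hsub (Finset.mem_erase.2 ⟨hzu, hz⟩)) hz2
        · exact res_eq hCc hAc huC hnuA hsub
      · refine ⟨(A, Cu), ?_, ?_⟩
        · simp only [Finset.mem_filter, Finset.mem_product]
          refine ⟨⟨hA, hC⟩, inter_neg_eq.2 ⟨hnuA, by simpa using huC, fun z hz hz2 => ?_⟩⟩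
          by_contra hzu
          have : -z ∈ Cu.erase u := Finset.mem_erase.2 ⟨by omega, hz2⟩
          exact hAc.2 z hz (hsub this)
        · rw [Finset.union_comm,
            show ({-u, -(-u)} : Finset ℤ) = {u, -u} by
              rw [show -(-u) = u by ring]; exact Finset.pair_comm _ _,
            res_eq hCc hAc huC hnuA hsub]
    · -- neutral case
      right
      have huA : u ∉ A := fun h => hACu (ldeg_unique h1 hA h hC huC)
      rw [Finset.erase_eq_of_notMem hnuA]
      refine ⟨hA, ?_, ?_⟩ <;> rcases hv with rfl | rfl
      · exact huA
      · exact hnuA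
      · exact hnuA
      · simpa using huA

section dpfacts
variable (hU : UHit G) {u : ℤ} (hu : u ≠ 0) (h1 : ldeg G u = 1)
  {Cu : Finset ℤ} (hC : Cu ∈ G) (huC : u ∈ Cu)

include hU hu h1 hC huC

lemma erase_injOn :
    Set.InjOn (fun A : Finset ℤ => A.erase (-u)) ↑(G.erase Cu) := by
  intro A hA B hB hAB
  simp only [Finset.coe_erase, Set.mem_diff, Finset.mem_coe, Set.mem_singleton_iff] at hA hB
  have hAB' : A.erase (-u) = B.erase (-u) := hAB
  by_contra hne
  obtain ⟨z, hzA, hzB⟩ := hU.2.1 A hA.1 B hB.1 hne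
  have hznu : z ≠ -u := by
    rintro rfl
    exact hB.2 (ldeg_unique h1 hB.1 (by simpa using hzB) hC huC)
  have hzu : z ≠ u := by
    rintro rfl
    exact hA.2 (ldeg_unique h1 hA.1 hzA hC huC)
  have h1' : z ∈ A.erase (-u) := Finset.mem_erase.2 ⟨hznu, hzA⟩
  rw [hAB'] at h1'
  exact (hU.1 B hB.1).2 z (Finset.mem_erase.1 h1').2 hzB

lemma ldeg_dp {x : ℤ} (hxu : x ≠ u) (hxnu : x ≠ -u) :
    ldeg ((G.erase Cu).image (fun A => A.erase (-u))) x
      = ldeg G x - (if x ∈ Cu then 1 else 0) := by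
  rw [ldeg, Finset.filter_image]
  rw [Finset.card_image_of_injOn ((erase_injOn hU hu h1 hC huC).mono
    (by intro A hA; exact (Finset.mem_coe.2 (Finset.mem_filter.1 hA).1)))]
  have : (G.erase Cu).filter (fun A => x ∈ A.erase (-u))
      = (G.filter (fun C => x ∈ C)).erase Cu := by
    ext A
    constructor
    · intro hA
      obtain ⟨hA1, hA2⟩ := Finset.mem_filter.1 hA
      exact Finset.mem_erase.2 ⟨(Finset.mem_erase.1 hA1).1,
        Finset.mem_filter.2 ⟨(Finset.mem_erase.1 hA1).2, Finset.mem_of_mem_erase hA2⟩⟩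
    · intro hA
      obtain ⟨hA1, hA2⟩ := Finset.mem_erase.1 hA
      exact Finset.mem_filter.2 ⟨Finset.mem_erase.2 ⟨hA1, (Finset.mem_filter.1 hA2).1⟩,
        Finset.mem_erase.2 ⟨hxnu, (Finset.mem_filter.1 hA2).2⟩⟩
  rw [this, ldeg]
  by_cases hxC : x ∈ Cu
  · rw [if_pos hxC, Finset.card_erase_of_mem (Finset.mem_filter.2 ⟨hC, hxC⟩)]
  · rw [if_neg hxC, Finset.erase_eq_of_notMem
      (show Cu ∉ G.filter (fun C => x ∈ C) from fun h => hxC (Finset.mem_filter.1 h).2),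
      Nat.sub_zero]

lemma ldeg_dp_u :
    ldeg ((G.erase Cu).image (fun A => A.erase (-u))) u = 0 := by
  rw [ldeg, Finset.card_eq_zero, Finset.filter_eq_empty_iff]
  intro R hR
  obtain ⟨A, hA, rfl⟩ := Finset.mem_image.1 hR
  intro huR
  have huA : u ∈ A := Finset.mem_of_mem_erase huR
  exact (Finset.mem_erase.1 hA).1 (ldeg_unique h1 (Finset.mem_of_mem_erase hA) huA hC huC)

lemma ldeg_dp_nu :
    ldeg ((G.erase Cu).image (fun A => A.erase (-u))) (-u) = 0 := by
  rw [ldeg, Finset.card_eq_zero, Finset.filter_eq_empty_iff]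
  intro R hR
  obtain ⟨A, hA, rfl⟩ := Finset.mem_image.1 hR
  exact fun h => (Finset.mem_erase.1 h).1 rfl

lemma dp_uhit : UHit ((G.erase Cu).image (fun A => A.erase (-u))) := by
  refine ⟨?_, ?_, ?_⟩
  · intro R hR
    obtain ⟨A, hA, rfl⟩ := Finset.mem_image.1 hR
    exact clause_erase (hU.1 A (Finset.mem_of_mem_erase hA)) _
  · intro R1 hR1 R2 hR2 hne
    obtain ⟨A, hA, rfl⟩ := Finset.mem_image.1 hR1
    obtain ⟨B, hB, rfl⟩ := Finset.mem_image.1 hR2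
    have hABne : A ≠ B := fun h => hne (h ▸ rfl)
    obtain ⟨z, hzA, hzB⟩ := hU.2.1 A (Finset.mem_of_mem_erase hA) B (Finset.mem_of_mem_erase hB) hABne
    have hznu : z ≠ -u := by
      rintro rfl
      exact (Finset.mem_erase.1 hB).1
        (ldeg_unique h1 (Finset.mem_of_mem_erase hB) (by simpa using hzB) hC huC)
    have hzu : z ≠ u := by
      rintro rfl
      exact (Finset.mem_erase.1 hA).1
        (ldeg_unique h1 (Finset.mem_of_mem_erase hA) hzA hC huC)
    exact ⟨z, Finset.mem_erase.2 ⟨hznu, hzA⟩, Finset.mem_erase.2 ⟨by omega, hzB⟩⟩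
  · intro hsat
    obtain ⟨S, hSc, hS⟩ := hsat
    apply hU.2.2
    refine ⟨insert u ((S.erase u).erase (-u)), ⟨?_, ?_⟩, ?_⟩
    · intro h0
      rcases Finset.mem_insert.1 h0 with h | h
      · exact hu h.symm
      · exact hSc.1 (Finset.mem_of_mem_erase (Finset.mem_of_mem_erase h))
    · intro z hz hnz
      rcases Finset.mem_insert.1 hz with h | h <;> rcases Finset.mem_insert.1 hnz with h' | h'
      · omega
      · exact (Finset.mem_erase.1 h').1 (by omega)
      · exact (Finset.mem_erase.1 h).1 (by omega)
      · exact hSc.2 z (Finset.mem_of_mem_erase (Finset.mem_of_mem_erase h))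
          (Finset.mem_of_mem_erase (Finset.mem_of_mem_erase h'))
    · intro D hD
      by_cases hDC : D = Cu
      · exact ⟨u, Finset.mem_inter.2 ⟨Finset.mem_insert_self _ _, hDC ▸ huC⟩⟩
      · have : D.erase (-u) ∈ (G.erase Cu).image (fun A => A.erase (-u)) :=
          Finset.mem_image.2 ⟨D, Finset.mem_erase.2 ⟨hDC, hD⟩, rfl⟩
        obtain ⟨z, hz⟩ := hS _ this
        obtain ⟨hzS, hzD⟩ := Finset.mem_inter.1 hz
        have hznu : z ≠ -u := (Finset.mem_erase.1 hzD).1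
        have hzu : z ≠ u := by
          rintro rfl
          exact hDC (ldeg_unique h1 hD (Finset.mem_of_mem_erase hzD) hC huC)
        refine ⟨z, Finset.mem_inter.2 ⟨?_, Finset.mem_of_mem_erase hzD⟩⟩
        exact Finset.mem_insert.2 (Or.inr (Finset.mem_erase.2 ⟨hznu, Finset.mem_erase.2 ⟨hzu, hzS⟩⟩))

lemma ldeg_lower {x : ℤ} (hx : x ∈ Cu.erase u) : ldeg G (-u) + 1 ≤ ldeg G x := by
  have hsub : insert Cu (G.filter (fun C => -u ∈ C)) ⊆ G.filter (fun C => x ∈ C) := by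
    intro D hD
    rcases Finset.mem_insert.1 hD with rfl | hD'
    · exact Finset.mem_filter.2 ⟨hC, Finset.mem_of_mem_erase hx⟩
    · obtain ⟨hDG, hDu⟩ := Finset.mem_filter.1 hD'
      exact Finset.mem_filter.2 ⟨hDG, structure1 hU hu h1 hC huC hDG hDu hx⟩
  have hnotin : Cu ∉ G.filter (fun C => -u ∈ C) := by
    intro h
    exact (hU.1 Cu hC).2 u huC (by simpa using (Finset.mem_filter.1 h).2)
  calc ldeg G (-u) + 1 = (insert Cu (G.filter (fun C => -u ∈ C))).card := by
        rw [Finset.card_insert_of_notMem hnotin, ldeg]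
    _ ≤ _ := Finset.card_le_card hsub

lemma cvar_dp (hk : 1 ≤ ldeg G (-u)) :
    cvar ((G.erase Cu).image (fun A => A.erase (-u))) = (cvar G).erase |u| := by
  set G' := (G.erase Cu).image (fun A => A.erase (-u)) with hG'
  ext w
  constructor
  · intro hw
    obtain ⟨R, hR, x, hx, rfl⟩ := mem_cvar_iff.1 hw
    obtain ⟨A, hA, rfl⟩ := Finset.mem_image.1 hR
    refine Finset.mem_erase.2 ⟨?_, mem_cvar_of (Finset.mem_of_mem_erase hA) (Finset.mem_of_mem_erase hx)⟩
    intro habs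
    have hxu : x = u ∨ x = -u := by
      rcases abs_cases x with ⟨hh, _⟩ | ⟨hh, _⟩ <;> rcases abs_cases u with ⟨hh', _⟩ | ⟨hh', _⟩ <;> omega
    rcases hxu with rfl | rfl
    · exact (Finset.mem_erase.1 hA).1
        (ldeg_unique h1 (Finset.mem_of_mem_erase hA) (Finset.mem_of_mem_erase hx) hC huC)
    · exact (Finset.mem_erase.1 hx).1 rfl
  · intro hw
    obtain ⟨hwu, hwG⟩ := Finset.mem_erase.1 hw
    obtain ⟨C, hCG, x, hx, rfl⟩ := mem_cvar_iff.1 hwG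
    have hxu : x ≠ u ∧ x ≠ -u := by
      constructor <;> rintro rfl
      · exact hwu rfl
      · exact hwu (abs_neg u)
    have hpos : 0 < ldeg G' x := by
      have hbase : 0 < ldeg G x := ldeg_pos hCG hx
      have := ldeg_dp hU hu h1 hC huC hxu.1 hxu.2
      rw [this]
      by_cases hxC : x ∈ Cu
      · have : x ∈ Cu.erase u := Finset.mem_erase.2 ⟨hxu.1, hxC⟩
        have := ldeg_lower hU hu h1 hC huC this
        simp only [if_pos hxC]
        omega
      · simp only [if_neg hxC]
        omega
    obtain ⟨R, hR, hxR⟩ := exists_of_ldeg_pos hpos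
    exact mem_cvar_of hR hxR

end dpfacts

def gfun (a b : ℕ) : ℕ :=
  (if min a b = 1 then 1 else 0) + (if min a b = 1 ∧ a + b = 2 then 1 else 0)

lemma gfun_le {a b a' b' : ℕ}
    (ha : a' = a ∨ (a' + 1 = a ∧ 3 ≤ a)) (hb : b' = b ∨ (b' + 1 = b ∧ 3 ≤ b)) :
    gfun a' b' ≤ gfun a b := by
  unfold gfun; split_ifs <;> omega

lemma gfun_le1 {a b a' b' : ℕ}
    (h : (a' = a ∧ b' = b) ∨ (a' + 1 = a ∧ 2 ≤ a ∧ b' = b) ∨ (b' + 1 = b ∧ 2 ≤ b ∧ a' = a)) :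
    gfun a' b' ≤ gfun a b + 1 := by
  unfold gfun; split_ifs <;> omega

lemma phi_eq (G : Cls) :
    nsv G + nosv G = ∑ w ∈ cvar G, gfun (ldeg G w) (ldeg G (-w)) := by
  rw [nsv, nosv, Finset.card_filter, Finset.card_filter, ← Finset.sum_add_distrib]
  exact Finset.sum_congr rfl (fun w _ => rfl)

/-- The key step lemma. -/
lemma step {G : Cls} (hU : UHit G) {v : ℤ} (hs : SingularVar G v) :
    UHit (dp v G) ∧ nsv (dp v G) + nosv (dp v G) + 1 ≤ nsv G + nosv G := by
  have hvpos : 0 < v := cvar_pos hU.1 hs.1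
  have hmin := hs.2
  -- choose the literal u of degree 1
  obtain ⟨u, hv, h1, hk1⟩ :
      ∃ u, (v = u ∨ v = -u) ∧ ldeg G u = 1 ∧ 1 ≤ ldeg G (-u) := by
    by_cases hld : ldeg G v = 1
    · exact ⟨v, Or.inl rfl, hld, by omega⟩
    · refine ⟨-v, Or.inr (by ring), by omega, by simp only [neg_neg]; omega⟩
  have hu0 : u ≠ 0 := by
    rcases hv with rfl | hv2
    · omega
    · omega
  have habs : |u| = v := by
    rcases hv with rfl | hv2
    · exact abs_of_pos hvpos
    · rw [hv2, abs_of_neg (by omega : u < 0)]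
  obtain ⟨Cu, hC, huC⟩ := exists_of_ldeg_pos (by omega : 0 < ldeg G u)
  rw [dp_eq hU hu0 hv h1 hC huC]
  set G' := (G.erase Cu).image (fun A => A.erase (-u)) with hG'
  have hU' : UHit G' := dp_uhit hU hu0 h1 hC huC
  refine ⟨hU', ?_⟩
  rw [phi_eq, phi_eq, cvar_dp hU hu0 h1 hC huC hk1, habs]
  rw [← Finset.add_sum_erase (cvar G) _ hs.1]
  set A := (cvar G).erase v with hA
  -- facts about elements of A
  have hwfacts : ∀ w ∈ A, w ≠ u ∧ w ≠ -u ∧ -w ≠ u ∧ -w ≠ -u ∧ 0 < w := by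
    intro w hw
    have hw1 : w ≠ v := (Finset.mem_erase.1 hw).1
    have hw2 : 0 < w := cvar_pos hU.1 (Finset.mem_of_mem_erase hw)
    rcases hv with rfl | hv2
    · exact ⟨by omega, by omega, by omega, by omega, hw2⟩
    · exact ⟨by omega, by omega, by omega, by omega, hw2⟩
  have hCuclause : IsClause Cu := hU.1 Cu hC
  have hldegA : ∀ x : ℤ, x ≠ u → x ≠ -u →
      ldeg G' x = ldeg G x - (if x ∈ Cu then 1 else 0) :=
    fun x hx1 hx2 => ldeg_dp hU hu0 h1 hC huC hx1 hx2
  have hlow : ∀ x : ℤ, x ≠ u → x ∈ Cu → ldeg G (-u) + 1 ≤ ldeg G x := by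
    intro x hx1 hx2
    exact ldeg_lower hU hu0 h1 hC huC (Finset.mem_erase.2 ⟨hx1, hx2⟩)
  -- "special" literal: in Cu with degree exactly 2
  by_cases hsp : ∃ w₀ ∈ A, (w₀ ∈ Cu ∧ ldeg G w₀ = 2) ∨ (-w₀ ∈ Cu ∧ ldeg G (-w₀) = 2)
  · -- a special variable exists; then k = 1 and it is unique
    obtain ⟨w₀, hw₀A, hw₀⟩ := hsp
    obtain ⟨x₀, hx₀w, hx₀Cu, hx₀2⟩ :
        ∃ x₀, (x₀ = w₀ ∨ x₀ = -w₀) ∧ x₀ ∈ Cu ∧ ldeg G x₀ = 2 := by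
      rcases hw₀ with ⟨h1', h2'⟩ | ⟨h1', h2'⟩
      · exact ⟨w₀, Or.inl rfl, h1', h2'⟩
      · exact ⟨-w₀, Or.inr rfl, h1', h2'⟩
    obtain ⟨hwu, hwnu, hnwu, hnwnu, hwpos⟩ := hwfacts w₀ hw₀A
    have hx₀u : x₀ ≠ u := by rcases hx₀w with rfl | rfl <;> assumption
    have hx₀nu : x₀ ≠ -u := by rcases hx₀w with rfl | rfl <;> assumption
    have hk : ldeg G (-u) = 1 := by
      have := hlow x₀ hx₀u hx₀Cu; omega
    -- the fs-pair
    obtain ⟨D, hD, huD⟩ := exists_of_ldeg_pos (by omega : 0 < ldeg G (-u))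
    have hDshape : D = insert (-u) (Cu.erase u) := fs_shape hU hu0 h1 hk hC huC hD huD
    have hnuCu : -u ∉ Cu := fun h => hCuclause.2 u huC (by simpa using h)
    have hDCu : D ≠ Cu := fun h => hnuCu (h ▸ huD)
    have hE : Cu.erase u ∈ G' := by
      refine Finset.mem_image.2 ⟨D, Finset.mem_erase.2 ⟨hDCu, hD⟩, ?_⟩
      rw [hDshape, Finset.erase_insert]
      intro h
      exact hnuCu (Finset.mem_of_mem_erase h)
    -- uniqueness of the special variable
    have huniq : ∀ w ∈ A, ((w ∈ Cu ∧ ldeg G w = 2) ∨ (-w ∈ Cu ∧ ldeg G (-w) = 2)) → w = w₀ := by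
      intro w hwA hw
      obtain ⟨hwu', hwnu', hnwu', hnwnu', hwpos'⟩ := hwfacts w hwA
      obtain ⟨x, hxw, hxCu, hx2⟩ :
          ∃ x, (x = w ∨ x = -w) ∧ x ∈ Cu ∧ ldeg G x = 2 := by
        rcases hw with ⟨ha', hb'⟩ | ⟨ha', hb'⟩
        · exact ⟨w, Or.inl rfl, ha', hb'⟩
        · exact ⟨-w, Or.inr rfl, ha', hb'⟩
      have hxu : x ≠ u := by rcases hxw with rfl | rfl <;> assumption
      have hxnu : x ≠ -u := by rcases hxw with rfl | rfl <;> assumption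
      have hxE : x ∈ Cu.erase u := Finset.mem_erase.2 ⟨hxu, hxCu⟩
      have hx₀E : x₀ ∈ Cu.erase u := Finset.mem_erase.2 ⟨hx₀u, hx₀Cu⟩
      have hd1 : ldeg G' x = 1 := by rw [hldegA x hxu hxnu, if_pos hxCu]; omega
      have hd2 : ldeg G' x₀ = 1 := by rw [hldegA x₀ hx₀u hx₀nu, if_pos hx₀Cu]; omega
      have := deg_one_unique hU' hE hxE hx₀E hd1 hd2
      rcases hxw with rfl | rfl <;> rcases hx₀w with h' | h' <;> omega
    have hw₀f : gfun (ldeg G' w₀) (ldeg G' (-w₀)) ≤ gfun (ldeg G w₀) (ldeg G (-w₀)) + 1 := by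
      apply gfun_le1
      have e1 := hldegA w₀ hwu hwnu
      have e2 := hldegA (-w₀) hnwu hnwnu
      rcases hw₀ with ⟨hxC, hx2⟩ | ⟨hxC, hx2⟩
      · have hno : -w₀ ∉ Cu := fun h => hCuclause.2 w₀ hxC h
        rw [if_pos hxC] at e1; rw [if_neg hno] at e2
        exact Or.inr (Or.inl ⟨by omega, by omega, by omega⟩)
      · have hno : w₀ ∉ Cu := fun h => hCuclause.2 w₀ h hxC
        rw [if_neg hno] at e1; rw [if_pos hxC] at e2
        exact Or.inr (Or.inr ⟨by omega, by omega, by omega⟩)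
    have hfv : gfun (ldeg G v) (ldeg G (-v)) = 2 := by
      have hv1 : ldeg G v = 1 := by
        rcases hv with rfl | hv2
        · exact h1
        · rw [hv2]; exact hk
      have hv2' : ldeg G (-v) = 1 := by
        rcases hv with rfl | hv2
        · exact hk
        · rw [hv2, neg_neg]; exact h1
      rw [hv1, hv2']; rfl
    have hsplit : ∑ w ∈ A, gfun (ldeg G' w) (ldeg G' (-w))
        = gfun (ldeg G' w₀) (ldeg G' (-w₀))
          + ∑ w ∈ A.erase w₀, gfun (ldeg G' w) (ldeg G' (-w)) :=
      (Finset.add_sum_erase A _ hw₀A).symm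
    have hsplit2 : ∑ w ∈ A, gfun (ldeg G w) (ldeg G (-w))
        = gfun (ldeg G w₀) (ldeg G (-w₀))
          + ∑ w ∈ A.erase w₀, gfun (ldeg G w) (ldeg G (-w)) :=
      (Finset.add_sum_erase A _ hw₀A).symm
    have hrest : ∑ w ∈ A.erase w₀, gfun (ldeg G' w) (ldeg G' (-w))
        ≤ ∑ w ∈ A.erase w₀, gfun (ldeg G w) (ldeg G (-w)) := by
      apply Finset.sum_le_sum
      intro w hw
      have hwA : w ∈ A := Finset.mem_of_mem_erase hw
      obtain ⟨hwu', hwnu', hnwu', hnwnu', hwpos'⟩ := hwfacts w hwA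
      have e1 := hldegA w hwu' hwnu'
      have e2 := hldegA (-w) hnwu' hnwnu'
      have hns : ¬((w ∈ Cu ∧ ldeg G w = 2) ∨ (-w ∈ Cu ∧ ldeg G (-w) = 2)) := by
        intro hcon
        exact (Finset.mem_erase.1 hw).1 (huniq w hwA hcon)
      apply gfun_le
      · by_cases hwC : w ∈ Cu
        · rw [if_pos hwC] at e1
          have hl := hlow w hwu' hwC
          have hne2 : ldeg G w ≠ 2 := fun h => hns (Or.inl ⟨hwC, h⟩)
          exact Or.inr ⟨by omega, by omega⟩
        · rw [if_neg hwC] at e1; exact Or.inl (by omega)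
      · by_cases hwC : -w ∈ Cu
        · rw [if_pos hwC] at e2
          have hl := hlow (-w) hnwu' hwC
          have hne2 : ldeg G (-w) ≠ 2 := fun h => hns (Or.inr ⟨hwC, h⟩)
          exact Or.inr ⟨by omega, by omega⟩
        · rw [if_neg hwC] at e2; exact Or.inl (by omega)
    omega
  · -- no special variable: pointwise decrease
    push_neg at hsp
    have hpt : ∀ w ∈ A, gfun (ldeg G' w) (ldeg G' (-w)) ≤ gfun (ldeg G w) (ldeg G (-w)) := by
      intro w hwA
      obtain ⟨hwu', hwnu', hnwu', hnwnu', hwpos'⟩ := hwfacts w hwA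
      have e1 := hldegA w hwu' hwnu'
      have e2 := hldegA (-w) hnwu' hnwnu'
      have hns := hsp w hwA
      apply gfun_le
      · by_cases hwC : w ∈ Cu
        · rw [if_pos hwC] at e1
          have hl := hlow w hwu' hwC
          have hne2 : ldeg G w ≠ 2 := hns.1 hwC
          exact Or.inr ⟨by omega, by omega⟩
        · rw [if_neg hwC] at e1; exact Or.inl (by omega)
      · by_cases hwC : -w ∈ Cu
        · rw [if_pos hwC] at e2
          have hl := hlow (-w) hnwu' hwC
          have hne2 : ldeg G (-w) ≠ 2 := hns.2 hwC
          exact Or.inr ⟨by omega, by omega⟩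
        · rw [if_neg hwC] at e2; exact Or.inl (by omega)
    have hsum : ∑ w ∈ A, gfun (ldeg G' w) (ldeg G' (-w))
        ≤ ∑ w ∈ A, gfun (ldeg G w) (ldeg G (-w)) := Finset.sum_le_sum hpt
    have hfv : 1 ≤ gfun (ldeg G v) (ldeg G (-v)) := by
      unfold gfun; split_ifs <;> omega
    omega

lemma nosv_le_nsv (G : Cls) : nosv G ≤ nsv G := by
  apply Finset.card_le_card
  intro x hx
  rw [Finset.mem_filter] at *
  exact ⟨hx.1, hx.2.1⟩

end SDP

/-- A singular DP-sequence from a UHIT ending in a nonsingular clause-set has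
length at most `2 · nsv(F)`. -/
theorem stmt7 (F : Cls) (hU : UHit F) (m : ℕ) (Fs : ℕ → Cls) (h0 : Fs 0 = F)
    (hseq : ∀ i < m, ∃ v, SingularVar (Fs i) v ∧ Fs (i + 1) = dp v (Fs i))
    (hns : Nonsingular (Fs m)) :
    m ≤ 2 * nsv F := by
  have key : ∀ i, i ≤ m →
      UHit (Fs i) ∧ nsv (Fs i) + nosv (Fs i) + i ≤ nsv (Fs 0) + nosv (Fs 0) := by
    intro i
    induction i with
    | zero => intro _; exact ⟨h0 ▸ hU, by omega⟩
    | succ n ih =>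
      intro hn
      obtain ⟨hu', hph⟩ := ih (by omega)
      obtain ⟨v, hsv, heq⟩ := hseq n (by omega)
      have hst := SDP.step hu' hsv
      rw [heq]
      exact ⟨hst.1, by omega⟩
  obtain ⟨_, hkey⟩ := key m le_rfl
  have h2 := SDP.nosv_le_nsv F
  rw [h0] at hkey
  omega
end

section
/- Let F be an unsatisfiable hitting clause-set and let F = F₀, F₁, …, F_m be a singular DP-sequence such that F_m is nonsingular. Then m ≤ 2 · nosv(F) + nnosv(F), where nosv(F) is the number of 1-singular variables of F and nnosv(F) is the number of singular variables of F that are not 1-singular. -/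
/-!
Give every 1-singular variable weight 2 and every other singular variable weight 1, so that the
total weight is `2 * nosv + nnosv`; a singular DP-step on a UHIT yields a UHIT of smaller weight.

Let the literal `x` occur only in the clause `C`, and let `-x ∈ D`. A total assignment
falsifies exactly one clause of a UHIT; if it falsifies `D`, flipping `x` must falsify `C`.
Choosing it to satisfy a literal of `C \ {x}` outside `D` is thus impossible: `C \ {x} ⊆ D`. Hence
eliminating `|x|` just sets `x` to true, which preserves being a UHIT and lowers the degree of
each literal of `C \ {x}` by one, all of them having degree above that of `-x`. So the variable
`|x|` loses its weight (1 or 2), and another variable can only gain weight, by one, when its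
literal in `C` drops from degree 2 to 1. This forces `-x` to occur once, so that `|x|` had
weight 2, and it happens to at most one literal, as a clause of a UHIT contains at most one
literal of degree 1.
-/

open Finset

theorem IsClause.ne_zero {C : Finset ℤ} (hC : IsClause C) {x : ℤ} (hx : x ∈ C) : x ≠ 0 :=
  fun h => hC.1 (h ▸ hx)

theorem IsClause.subset {C D : Finset ℤ} (hD : IsClause D) (hCD : C ⊆ D) : IsClause C :=
  ⟨fun h => hD.1 (hCD h), fun x hx hnx => hD.2 x (hCD hx) (hCD hnx)⟩

theorem IsClause.insert {C : Finset ℤ} (hC : IsClause C) {x : ℤ} (hx : x ≠ 0) (hnx : -x ∉ C) :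
    IsClause (insert x C) := by
  refine ⟨fun h => ?_, fun a ha hna => ?_⟩
  · rcases mem_insert.1 h with h | h
    · exact hx h.symm
    · exact hC.1 h
  · rcases mem_insert.1 ha with rfl | ha <;> rcases mem_insert.1 hna with h | h
    · exact hx (by omega)
    · exact hnx h
    · exact hnx (by rwa [← h, neg_neg])
    · exact hC.2 a ha h

theorem ldeg_pos_iff {F : Cls} {x : ℤ} : 0 < ldeg F x ↔ ∃ C ∈ F, x ∈ C := by
  simp [ldeg, card_pos, filter_nonempty_iff]

theorem filter_mem_eq_singleton_of_ldeg_eq_one {F : Cls} {x : ℤ} (h : ldeg F x = 1)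
    {C : Finset ℤ} (hC : C ∈ F) (hxC : x ∈ C) : F.filter (x ∈ ·) = {C} := by
  obtain ⟨a, ha⟩ := card_eq_one.1 h
  obtain rfl : C = a := mem_singleton.1 (ha ▸ mem_filter.2 ⟨hC, hxC⟩)
  exact ha

theorem eq_of_ldeg_eq_one {F : Cls} {x : ℤ} (h : ldeg F x = 1) {C D : Finset ℤ}
    (hC : C ∈ F) (hxC : x ∈ C) (hD : D ∈ F) (hxD : x ∈ D) : C = D :=
  card_le_one.1 h.le C (mem_filter.2 ⟨hC, hxC⟩) D (mem_filter.2 ⟨hD, hxD⟩)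

/-- A total assignment, represented by its set of true literals. -/
def IsTotalAssignment (T : Set ℤ) : Prop := ∀ x ≠ 0, -x ∈ T ↔ x ∉ T

def Falsifies (T : Set ℤ) (C : Finset ℤ) : Prop := ∀ z ∈ C, z ∉ T

theorem IsTotalAssignment.flip {T : Set ℤ} (hT : IsTotalAssignment T) {w : ℤ} (hw : w ≠ 0) :
    IsTotalAssignment (insert w (T \ {-w})) := by
  intro x hx
  have := hT x hx
  simp only [Set.mem_insert_iff, Set.mem_sdiff, Set.mem_singleton_iff, neg_inj]
  rcases eq_or_ne x w with rfl | h
  · have : -x ≠ x := by omega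
    simp [this]
  rcases eq_or_ne x (-w) with rfl | h'
  · simpa using h
  · have : -x ≠ w := fun e => h' (by omega)
    simp [h, h', this, ‹-x ∈ T ↔ x ∉ T›]

theorem IsClause.exists_isTotalAssignment_falsifies {C : Finset ℤ} (hC : IsClause C) :
    ∃ T, IsTotalAssignment T ∧ Falsifies T C := by
  refine ⟨{x | -x ∈ C ∨ (x ∉ C ∧ -x ∉ C ∧ 0 < x)}, fun x hx => ?_, fun z hz h => ?_⟩
  · have h1 := hC.2 x
    have h2 := hC.2 (-x)
    simp only [Set.mem_ofPred_eq, neg_neg] at h1 h2 ⊢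
    by_cases a : x ∈ C <;> by_cases b : -x ∈ C <;> simp_all; omega
  · rcases h with h | ⟨h, -⟩
    · exact hC.2 z hz h
    · exact h hz

theorem exists_falsifies_of_not_sat {F : Cls} (hF : IsClauseSet F) (hF' : ¬ Sat F)
    {T : Set ℤ} (hT : IsTotalAssignment T) : ∃ C ∈ F, Falsifies T C := by
  classical
  by_contra! h
  simp only [Falsifies, not_forall, not_not] at h
  refine hF' ⟨(F.sup id).filter (· ∈ T), ⟨fun h0 => ?_, fun x hx hnx => ?_⟩, fun D hD => ?_⟩
  · obtain ⟨C, hC, h0C⟩ := mem_sup.1 (mem_filter.1 h0).1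
    exact (hF C hC).1 h0C
  · obtain ⟨C, hC, hxC⟩ := mem_sup.1 (mem_filter.1 hx).1
    exact (hT x ((hF C hC).ne_zero hxC)).1 (mem_filter.1 hnx).2 (mem_filter.1 hx).2
  · obtain ⟨z, hzD, hzT⟩ := h D hD
    exact ⟨z, mem_inter.2 ⟨mem_filter.2 ⟨mem_sup.2 ⟨D, hD, hzD⟩, hzT⟩, hzD⟩⟩

theorem Hitting.eq_of_falsifies {F : Cls} (hH : Hitting F) (hF : IsClauseSet F) {T : Set ℤ}
    (hT : IsTotalAssignment T) {C D : Finset ℤ} (hC : C ∈ F) (hD : D ∈ F) (hTC : Falsifies T C)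
    (hTD : Falsifies T D) : C = D := by
  by_contra hne
  obtain ⟨z, hzC, hzD⟩ := hH C hC D hD hne
  exact hTD _ hzD ((hT z ((hF C hC).ne_zero hzC)).2 (hTC z hzC))

/-- `C` is the only clause falsified by `T`, so the clause falsified after flipping `w` must
contain `-w`. -/
theorem UHit.exists_neg_mem_falsifies_flip {F : Cls} (hU : UHit F) {T : Set ℤ}
    (hT : IsTotalAssignment T) {C : Finset ℤ} (hC : C ∈ F) (hTC : Falsifies T C) {w : ℤ}
    (hw : w ∈ C) :
    ∃ H ∈ F, -w ∈ H ∧ Falsifies (insert w (T \ {-w})) H := by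
  obtain ⟨H, hH, hTH⟩ :=
    exists_falsifies_of_not_sat hU.1 hU.2.2 (hT.flip ((hU.1 C hC).ne_zero hw))
  refine ⟨H, hH, by_contra fun hwH => ?_, hTH⟩
  have hTH' : Falsifies T H := fun z hz hzT =>
    hTH z hz (Set.mem_insert_of_mem _ ⟨hzT, fun e => hwH (e ▸ hz)⟩)
  obtain rfl := hU.2.1.eq_of_falsifies hU.1 hT hH hC hTH' hTC
  exact hTH w hw (Set.mem_insert _ _)

theorem UHit.exists_neg_mem {F : Cls} (hU : UHit F) {A : Finset ℤ} (hA : A ∈ F) {w : ℤ}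
    (hw : w ∈ A) : ∃ H ∈ F, -w ∈ H := by
  obtain ⟨T, hT, hTA⟩ := (hU.1 A hA).exists_isTotalAssignment_falsifies
  obtain ⟨H, hH, hwH, -⟩ := hU.exists_neg_mem_falsifies_flip hT hA hTA hw
  exact ⟨H, hH, hwH⟩

theorem UHit.erase_subset_of_ldeg_eq_one {F : Cls} (hU : UHit F) {w : ℤ} (h1 : ldeg F w = 1)
    {B G : Finset ℤ} (hB : B ∈ F) (hwB : w ∈ B) (hG : G ∈ F) (hwG : -w ∈ G) :
    B.erase w ⊆ G := by
  intro y hy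
  by_contra hyG
  obtain ⟨hyw, hyB⟩ := mem_erase.1 hy
  have hy0 := (hU.1 B hB).ne_zero hyB
  obtain ⟨T, hT, hTG⟩ :=
    ((hU.1 G hG).insert (neg_ne_zero.2 hy0) (by rwa [neg_neg])).exists_isTotalAssignment_falsifies
  have hyT : y ∈ T :=
    by_contra fun h => hTG (-y) (mem_insert_self _ _) ((hT y hy0).2 h)
  obtain ⟨H, hH, hwH, hTH⟩ := hU.exists_neg_mem_falsifies_flip hT hG
    (fun z hz => hTG z (mem_insert_of_mem hz)) hwG
  rw [neg_neg] at hwH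
  obtain rfl := eq_of_ldeg_eq_one h1 hH hwH hB hwB
  exact hTH y hyB (Set.mem_insert_of_mem _ ⟨hyT, by simpa using hyw⟩)

theorem UHit.card_filter_ldeg_eq_one_le_one {F : Cls} (hU : UHit F) {A : Finset ℤ}
    (hA : A ∈ F) :
    #(A.filter (ldeg F · = 1)) ≤ 1 := by
  refine card_le_one.2 fun w hw w' hw' => by_contra fun hne => ?_
  rw [mem_filter] at hw hw'
  obtain ⟨H, hH, hwH⟩ := hU.exists_neg_mem hA hw.1
  have hw'H : w' ∈ H :=
    hU.erase_subset_of_ldeg_eq_one hw.2 hA hw.1 hH hwH (mem_erase.2 ⟨Ne.symm hne, hw'.1⟩)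
  obtain rfl := eq_of_ldeg_eq_one hw'.2 hH hw'H hA hw'.1
  exact (hU.1 H hA).2 w hw.1 hwH

theorem UHit.ldeg_neg_lt_ldeg {F : Cls} (hU : UHit F) {x : ℤ} (h1 : ldeg F x = 1)
    {C : Finset ℤ} (hC : C ∈ F) (hxC : x ∈ C) {w : ℤ} (hwC : w ∈ C) (hwx : w ≠ x) :
    ldeg F (-x) < ldeg F w := by
  have hCx : C ∉ F.filter (-x ∈ ·) := fun h => (hU.1 C hC).2 x hxC (mem_filter.1 h).2
  have hsub : insert C (F.filter (-x ∈ ·)) ⊆ F.filter (w ∈ ·) := by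
    intro G hG
    rcases mem_insert.1 hG with rfl | hG
    · exact mem_filter.2 ⟨hC, hwC⟩
    · obtain ⟨hG, hxG⟩ := mem_filter.1 hG
      exact mem_filter.2 ⟨hG, hU.erase_subset_of_ldeg_eq_one h1 hC hxC hG hxG
        (mem_erase.2 ⟨hwx, hwC⟩)⟩
  have := card_le_card hsub
  rw [card_insert_of_notMem hCx] at this
  exact this

/-- The result of applying the partial assignment `x ↦ true`. -/
def assign (x : ℤ) (F : Cls) : Cls := (F.filter (x ∉ ·)).image (·.erase (-x))

theorem mem_assign {x : ℤ} {F : Cls} {R : Finset ℤ} :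
    R ∈ assign x F ↔ ∃ G ∈ F, x ∉ G ∧ G.erase (-x) = R := by
  simp [assign, and_assoc]

theorem Hitting.exists_clash_erase {F : Cls} (hH : Hitting F) {x : ℤ} {G₁ G₂ : Finset ℤ}
    (h₁ : G₁ ∈ F) (hx₁ : x ∉ G₁) (h₂ : G₂ ∈ F) (hx₂ : x ∉ G₂) (hne : G₁ ≠ G₂) :
    ∃ z ∈ G₁.erase (-x), -z ∈ G₂.erase (-x) := by
  obtain ⟨z, hz₁, hz₂⟩ := hH G₁ h₁ G₂ h₂ hne
  have hzx : z ≠ x := fun e => hx₁ (e ▸ hz₁)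
  have hznx : z ≠ -x := fun e => hx₂ (by rwa [e, neg_neg] at hz₂)
  exact ⟨z, mem_erase.2 ⟨hznx, hz₁⟩, mem_erase.2 ⟨by omega, hz₂⟩⟩

theorem Hitting.injOn_erase_neg {F : Cls} (hH : Hitting F) (hF : IsClauseSet F) (x : ℤ) :
    Set.InjOn (·.erase (-x)) (F.filter (x ∉ ·) : Set (Finset ℤ)) := by
  intro G₁ h₁ G₂ h₂ heq
  simp only [coe_filter, Set.mem_ofPred_eq] at h₁ h₂
  by_contra hne
  obtain ⟨z, hz₁, hz₂⟩ := hH.exists_clash_erase h₁.1 h₁.2 h₂.1 h₂.2 hne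
  rw [show G₁.erase (-x) = G₂.erase (-x) from heq] at hz₁
  exact (hF G₂ h₂.1).2 z (mem_of_mem_erase hz₁) (mem_of_mem_erase hz₂)

theorem UHit.uhit_assign {F : Cls} (hU : UHit F) {x : ℤ} (hx : x ≠ 0) : UHit (assign x F) := by
  refine ⟨fun R hR => ?_, fun R₁ hR₁ R₂ hR₂ hne => ?_, fun ⟨S, hS, hSF⟩ => hU.2.2 ?_⟩
  · obtain ⟨G, hG, -, rfl⟩ := mem_assign.1 hR
    exact (hU.1 G hG).subset (erase_subset _ _)
  · obtain ⟨G₁, h₁, hx₁, rfl⟩ := mem_assign.1 hR₁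
    obtain ⟨G₂, h₂, hx₂, rfl⟩ := mem_assign.1 hR₂
    exact hU.2.1.exists_clash_erase h₁ hx₁ h₂ hx₂ (fun e => hne (e ▸ rfl))
  · refine ⟨insert x (S.erase (-x)), (hS.subset (erase_subset _ _)).insert hx (notMem_erase _ _),
      fun D hD => ?_⟩
    by_cases hxD : x ∈ D
    · exact ⟨x, mem_inter.2 ⟨mem_insert_self _ _, hxD⟩⟩
    · obtain ⟨z, hz⟩ := hSF _ (mem_assign.2 ⟨D, hD, hxD, rfl⟩)
      obtain ⟨hzS, hzD⟩ := mem_inter.1 hz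
      obtain ⟨hzx, hzD⟩ := mem_erase.1 hzD
      exact ⟨z, mem_inter.2 ⟨mem_insert_of_mem (mem_erase.2 ⟨hzx, hzS⟩), hzD⟩⟩

theorem ldeg_assign {F : Cls} (hH : Hitting F) (hF : IsClauseSet F) {x w : ℤ} (hw : w ≠ -x) :
    ldeg (assign x F) w = #(F.filter (fun G => x ∉ G ∧ w ∈ G)) := by
  rw [ldeg, assign, filter_image, card_image_of_injOn
    ((hH.injOn_erase_neg hF x).mono (coe_subset.2 (filter_subset _ _))), filter_filter]
  simp [mem_erase, hw]

theorem ldeg_eq_ldeg_assign_add {F : Cls} (hH : Hitting F) (hF : IsClauseSet F) {x : ℤ}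
    (h1 : ldeg F x = 1) {C : Finset ℤ} (hC : C ∈ F) (hxC : x ∈ C) {w : ℤ} (hw : w ≠ -x) :
    ldeg F w = ldeg (assign x F) w + if w ∈ C then 1 else 0 := by
  have hx : (F.filter (w ∈ ·)).filter (x ∉ ·) = F.filter (fun G => x ∉ G ∧ w ∈ G) := by
    rw [filter_filter]; simp only [and_comm]
  have hC' : (F.filter (w ∈ ·)).filter (fun G => ¬ x ∉ G) = ({C} : Cls).filter (w ∈ ·) := by
    simp only [not_not]
    rw [filter_comm, filter_mem_eq_singleton_of_ldeg_eq_one h1 hC hxC]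
  rw [ldeg, ← card_filter_add_card_filter_not (x ∉ ·), hx, hC', ← ldeg_assign hH hF hw,
    filter_singleton]
  split_ifs <;> simp

theorem mem_cvar {F : Cls} {u : ℤ} : u ∈ cvar F ↔ ∃ C ∈ F, ∃ y ∈ C, |y| = u := by
  simp [cvar, mem_sup]

theorem cvar_assign_subset (x : ℤ) (F : Cls) : cvar (assign x F) ⊆ (cvar F).erase |x| := by
  intro u hu
  obtain ⟨R, hR, y, hyR, rfl⟩ := mem_cvar.1 hu
  obtain ⟨G, hG, hxG, rfl⟩ := mem_assign.1 hR
  obtain ⟨hyx, hyG⟩ := mem_erase.1 hyR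
  refine mem_erase.2 ⟨fun e => ?_, mem_cvar.2 ⟨G, hG, y, hyG, rfl⟩⟩
  rcases abs_eq_abs.1 e with rfl | rfl
  exacts [hxG hyG, hyx rfl]

theorem mem_dp {v : ℤ} {F : Cls} {R : Finset ℤ} :
    R ∈ dp v F ↔ (∃ P ∈ F, ∃ Q ∈ F, P ∩ Q.image (fun x => -x) = {v} ∧
      (P ∪ Q) \ {v, -v} = R) ∨ (R ∈ F ∧ v ∉ R ∧ -v ∉ R) := by
  simp [dp, and_assoc]

theorem inter_image_neg_eq_singleton_comm {P Q : Finset ℤ} {v : ℤ}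
    (h : P ∩ Q.image (fun x => -x) = {v}) : Q ∩ P.image (fun x => -x) = {-v} := by
  have := congrArg (image (fun x : ℤ => -x)) h
  rw [image_inter _ _ neg_injective, image_image, image_singleton, inter_comm] at this
  simpa [Function.comp_def] using this

theorem dp_neg (v : ℤ) (F : Cls) : dp (-v) F = dp v F := by
  ext R
  simp only [mem_dp, neg_neg]
  constructor <;> rintro (⟨P, hP, Q, hQ, h, rfl⟩ | ⟨hR, h₁, h₂⟩)
  · exact .inl ⟨Q, hQ, P, hP, by simpa using inter_image_neg_eq_singleton_comm h,
      by rw [union_comm, pair_comm]⟩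
  · exact .inr ⟨hR, h₂, h₁⟩
  · exact .inl ⟨Q, hQ, P, hP, inter_image_neg_eq_singleton_comm h,
      by rw [union_comm, pair_comm]⟩
  · exact .inr ⟨hR, h₂, h₁⟩

/-- Every resolvent `(C ∪ D) \ {x, -x}` is `D \ {-x}`, because `C \ {x} ⊆ D`. -/
theorem UHit.dp_eq_assign {F : Cls} (hU : UHit F) {x : ℤ} (h1 : ldeg F x = 1) {C : Finset ℤ}
    (hC : C ∈ F) (hxC : x ∈ C) : dp x F = assign x F := by
  have hsub : ∀ D ∈ F, -x ∈ D → C.erase x ⊆ D := fun D hD hxD =>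
    hU.erase_subset_of_ldeg_eq_one h1 hC hxC hD hxD
  have hres : ∀ D ∈ F, -x ∈ D → (C ∪ D) \ {x, -x} = D.erase (-x) := by
    intro D hD hxD
    have hxD' : x ∉ D := fun h => (hU.1 D hD).2 x h hxD
    ext z
    simp only [mem_sdiff, mem_union, mem_insert, mem_singleton, mem_erase, not_or]
    constructor
    · rintro ⟨hz | hz, hzx, hznx⟩
      exacts [⟨hznx, hsub D hD hxD (mem_erase.2 ⟨hzx, hz⟩)⟩, ⟨hznx, hz⟩]
    · rintro ⟨hznx, hz⟩
      exact ⟨.inr hz, fun e => hxD' (e ▸ hz), hznx⟩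
  ext R
  rw [mem_dp, mem_assign]
  constructor
  · rintro (⟨P, hP, Q, hQ, h, rfl⟩ | ⟨hR, hxR, hnxR⟩)
    · have hx : x ∈ P ∩ Q.image (fun x => -x) := h ▸ mem_singleton_self x
      simp only [mem_inter, mem_image] at hx
      obtain ⟨hxP, y, hyQ, hyx⟩ := hx
      obtain rfl : y = -x := by omega
      obtain rfl := eq_of_ldeg_eq_one h1 hP hxP hC hxC
      exact ⟨Q, hQ, fun h => (hU.1 Q hQ).2 x h hyQ, (hres Q hQ hyQ).symm⟩
    · exact ⟨R, hR, hxR, erase_eq_of_notMem hnxR⟩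
  · rintro ⟨G, hG, hxG, rfl⟩
    by_cases hnxG : -x ∈ G
    · refine .inl ⟨C, hC, G, hG, ?_, hres G hG hnxG⟩
      ext z
      simp only [mem_inter, mem_image, mem_singleton]
      constructor
      · rintro ⟨hzC, y, hyG, rfl⟩
        by_contra hyx
        exact (hU.1 G hG).2 y hyG (hsub G hG hnxG (mem_erase.2 ⟨hyx, hzC⟩))
      · rintro rfl
        exact ⟨hxC, -z, hnxG, neg_neg z⟩
    · exact .inr ⟨by rwa [erase_eq_of_notMem hnxG], by rwa [erase_eq_of_notMem hnxG],
        by rwa [erase_eq_of_notMem hnxG]⟩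

theorem nonneg_of_mem_cvar {F : Cls} {u : ℤ} (hu : u ∈ cvar F) : 0 ≤ u := by
  obtain ⟨-, -, y, -, rfl⟩ := mem_cvar.1 hu
  exact abs_nonneg y

def singularWeight (a b : ℕ) : ℕ := if min a b = 1 then (if a + b = 2 then 2 else 1) else 0

def singularMeasure (F : Cls) : ℕ := ∑ u ∈ cvar F, singularWeight (ldeg F u) (ldeg F (-u))

theorem singularMeasure_eq (F : Cls) : singularMeasure F = 2 * nosv F + nnosv F := by
  rw [singularMeasure, nosv, nnosv, card_filter, card_filter, mul_sum, ← sum_add_distrib]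
  refine sum_congr rfl fun u _ => ?_
  simp only [vdeg, singularWeight]
  by_cases h₁ : min (ldeg F u) (ldeg F (-u)) = 1 <;> by_cases h₂ : ldeg F u + ldeg F (-u) = 2 <;>
    simp [h₁, h₂]

theorem singularWeight_comm (a b : ℕ) : singularWeight a b = singularWeight b a := by
  simp only [singularWeight, min_comm, add_comm]

theorem singularWeight_le_succ (a b : ℕ) :
    singularWeight a b ≤ singularWeight (a + 1) b + if a = 1 then 1 else 0 := by
  simp only [singularWeight]
  split_ifs <;> omega

theorem singularWeight_assign_le {F : Cls} (hH : Hitting F) (hF : IsClauseSet F) {x : ℤ}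
    (h1 : ldeg F x = 1) {C : Finset ℤ} (hC : C ∈ F) (hxC : x ∈ C) {u : ℤ} (hu : 0 ≤ u)
    (hux : u ≠ |x|) :
    singularWeight (ldeg (assign x F) u) (ldeg (assign x F) (-u)) ≤
      singularWeight (ldeg F u) (ldeg F (-u)) +
        if u ∈ ((C.erase x).filter (ldeg F · = 2)).image abs then 1 else 0 := by
  have hne : u ≠ -x ∧ -u ≠ -x ∧ u ≠ x ∧ -u ≠ x := by
    rcases abs_cases x with ⟨h, _⟩ | ⟨h, _⟩ <;> rw [h] at hux <;> omega
  have hpos := ldeg_eq_ldeg_assign_add hH hF h1 hC hxC hne.1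
  have hneg := ldeg_eq_ldeg_assign_add hH hF h1 hC hxC hne.2.1
  have hbump : ∀ w ∈ C, w ≠ x → |w| = u → ldeg F w = ldeg (assign x F) w + 1 →
      (if ldeg (assign x F) w = 1 then 1 else 0) ≤
        if u ∈ ((C.erase x).filter (ldeg F · = 2)).image abs then 1 else 0 := by
    intro w hwC hwx hwu hw
    split_ifs with h h' <;> try omega
    exact absurd (mem_image.2 ⟨w, mem_filter.2 ⟨mem_erase.2 ⟨hwx, hwC⟩, by omega⟩, hwu⟩) h'
  by_cases huC : u ∈ C
  · have hnuC : -u ∉ C := (hF C hC).2 u huC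
    rw [if_pos huC] at hpos
    rw [if_neg hnuC, add_zero] at hneg
    rw [hpos, hneg]
    exact (singularWeight_le_succ _ _).trans
      (Nat.add_le_add_left (hbump u huC hne.2.2.1 (abs_of_nonneg hu) hpos) _)
  by_cases hnuC : -u ∈ C
  · rw [if_neg huC, add_zero] at hpos
    rw [if_pos hnuC] at hneg
    rw [hpos, hneg, singularWeight_comm, singularWeight_comm (ldeg _ u)]
    exact (singularWeight_le_succ _ _).trans (Nat.add_le_add_left
      (hbump (-u) hnuC hne.2.2.2 (by rw [abs_neg, abs_of_nonneg hu]) hneg) _)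
  · rw [if_neg huC, add_zero] at hpos
    rw [if_neg hnuC, add_zero] at hneg
    rw [hpos, hneg]
    exact le_self_add

/-- Such literals all lie in the clause `D \ {-x}` of the assigned UHIT, where they have degree
one, and there are none unless `-x` occurs once. -/
theorem UHit.card_filter_ldeg_eq_two_lt {F : Cls} (hU : UHit F) {x : ℤ} (h1 : ldeg F x = 1)
    (hk : 0 < ldeg F (-x)) {C : Finset ℤ} (hC : C ∈ F) (hxC : x ∈ C) :
    #((C.erase x).filter (ldeg F · = 2)) < singularWeight (ldeg F x) (ldeg F (-x)) := by
  obtain ⟨D, hD, hxD⟩ := ldeg_pos_iff.1 hk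
  have hlt : ∀ w ∈ C.erase x, ldeg F (-x) < ldeg F w := fun w hw =>
    hU.ldeg_neg_lt_ldeg h1 hC hxC (mem_erase.1 hw).2 (mem_erase.1 hw).1
  rw [h1]
  rcases Nat.lt_or_ge 1 (ldeg F (-x)) with hk2 | hk1
  · rw [filter_false_of_mem fun w hw => by have := hlt w hw; omega, card_empty]
    simp only [singularWeight]
    split_ifs <;> omega
  have hk1 : ldeg F (-x) = 1 := by omega
  have hA : D.erase (-x) ∈ assign x F :=
    mem_assign.2 ⟨D, hD, fun h => (hU.1 D hD).2 x h hxD, rfl⟩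
  have hsub : (C.erase x).filter (ldeg F · = 2) ⊆
      (D.erase (-x)).filter (ldeg (assign x F) · = 1) := by
    intro w hw
    obtain ⟨hwC', hw2⟩ := mem_filter.1 hw
    obtain ⟨hwx, hwC⟩ := mem_erase.1 hwC'
    have hwnx : w ≠ -x := fun e => (hU.1 C hC).2 x hxC (e ▸ hwC)
    have := ldeg_eq_ldeg_assign_add hU.2.1 hU.1 h1 hC hxC hwnx
    rw [if_pos hwC] at this
    exact mem_filter.2
      ⟨mem_erase.2 ⟨hwnx, hU.erase_subset_of_ldeg_eq_one h1 hC hxC hD hxD hwC'⟩, by omega⟩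
  have := (hU.uhit_assign ((hU.1 C hC).ne_zero hxC)).card_filter_ldeg_eq_one_le_one hA
  have := card_le_card hsub
  rw [hk1, show singularWeight 1 1 = 2 from rfl]
  omega

theorem UHit.singularMeasure_assign_lt {F : Cls} (hU : UHit F) {x : ℤ} (h1 : ldeg F x = 1)
    (hk : 0 < ldeg F (-x)) : singularMeasure (assign x F) < singularMeasure F := by
  obtain ⟨C, hC, hxC⟩ := ldeg_pos_iff.1 (h1 ▸ one_pos)
  have hx : |x| ∈ cvar F := mem_cvar.2 ⟨C, hC, x, hxC, rfl⟩
  have hwx : singularWeight (ldeg F |x|) (ldeg F (-|x|)) =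
      singularWeight (ldeg F x) (ldeg F (-x)) := by
    rcases abs_choice x with h | h <;> rw [h]
    rw [neg_neg, singularWeight_comm]
  set Y := ((C.erase x).filter (ldeg F · = 2)).image abs
  set wt := fun G u => singularWeight (ldeg G u) (ldeg G (-u))
  calc singularMeasure (assign x F)
      ≤ ∑ u ∈ (cvar F).erase |x|, wt (assign x F) u :=
        sum_le_sum_of_subset (cvar_assign_subset x F)
    _ ≤ ∑ u ∈ (cvar F).erase |x|, (wt F u + if u ∈ Y then 1 else 0) :=
        sum_le_sum fun u hu => singularWeight_assign_le hU.2.1 hU.1 h1 hC hxC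
          (nonneg_of_mem_cvar (mem_of_mem_erase hu)) (mem_erase.1 hu).1
    _ = ∑ u ∈ (cvar F).erase |x|, wt F u + #(((cvar F).erase |x|).filter (· ∈ Y)) := by
        rw [sum_add_distrib, sum_boole, Nat.cast_id]
    _ ≤ ∑ u ∈ (cvar F).erase |x|, wt F u + #((C.erase x).filter (ldeg F · = 2)) := by
        refine Nat.add_le_add_left ?_ _
        exact (card_le_card (fun u hu => (mem_filter.1 hu).2 :
          ((cvar F).erase |x|).filter (· ∈ Y) ⊆ Y)).trans card_image_le
    _ < ∑ u ∈ (cvar F).erase |x|, wt F u + wt F |x| := by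
        gcongr
        rw [show wt F |x| = _ from hwx]
        exact hU.card_filter_ldeg_eq_two_lt h1 hk hC hxC
    _ = singularMeasure F := sum_erase_add _ _ hx

theorem UHit.dp_of_singularVar {F : Cls} (hU : UHit F) {v : ℤ} (hv : SingularVar F v) :
    UHit (dp v F) ∧ singularMeasure (dp v F) < singularMeasure F := by
  obtain ⟨-, hmin⟩ := hv
  obtain ⟨x, hx, h1, hk⟩ : ∃ x, dp v F = dp x F ∧ ldeg F x = 1 ∧ 0 < ldeg F (-x) := by
    rcases le_total (ldeg F v) (ldeg F (-v)) with h | h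
    · exact ⟨v, rfl, by omega, by omega⟩
    · exact ⟨-v, (dp_neg v F).symm, by omega, by rw [neg_neg]; omega⟩
  obtain ⟨C, hC, hxC⟩ := ldeg_pos_iff.1 (h1 ▸ one_pos)
  rw [hx, hU.dp_eq_assign h1 hC hxC]
  exact ⟨hU.uhit_assign ((hU.1 C hC).ne_zero hxC), hU.singularMeasure_assign_lt h1 hk⟩

theorem UHit.singularMeasure_add_le_of_singular_dp {m : ℕ} {Fs : ℕ → Cls} (hU : UHit (Fs 0))
    (hseq : ∀ i < m, ∃ v, SingularVar (Fs i) v ∧ Fs (i + 1) = dp v (Fs i)) :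
    ∀ i ≤ m, UHit (Fs i) ∧ singularMeasure (Fs i) + i ≤ singularMeasure (Fs 0) := by
  intro i hi
  induction i with
  | zero => exact ⟨hU, le_rfl⟩
  | succ i ih =>
    obtain ⟨hUi, hi'⟩ := ih (by omega)
    obtain ⟨v, hv, hFs⟩ := hseq i (by omega)
    obtain ⟨hU', hlt⟩ := hUi.dp_of_singularVar hv
    rw [hFs]
    exact ⟨hU', by omega⟩

theorem stmt8_general (F : Cls) (hU : UHit F) (m : ℕ) (Fs : ℕ → Cls) (h0 : Fs 0 = F)
    (hseq : ∀ i < m, ∃ v, SingularVar (Fs i) v ∧ Fs (i + 1) = dp v (Fs i)) :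
    m ≤ 2 * nosv F + nnosv F := by
  subst h0
  have := (hU.singularMeasure_add_le_of_singular_dp hseq m le_rfl).2
  rw [singularMeasure_eq (Fs 0)] at this
  omega

/-- A singular DP-sequence from a UHIT ending in a nonsingular clause-set has
length at most `2 · nosv(F) + nnosv(F)`. -/
theorem stmt8 (F : Cls) (hU : UHit F) (m : ℕ) (Fs : ℕ → Cls) (h0 : Fs 0 = F)
    (hseq : ∀ i < m, ∃ v, SingularVar (Fs i) v ∧ Fs (i + 1) = dp v (Fs i))
    (hns : Nonsingular (Fs m)) :
    m ≤ 2 * nosv F + nnosv F :=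
  stmt8_general F hU m Fs h0 hseq
end
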